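/- arXiv:1902.08981 — 5 statements merged into one kernel-verified Lean document; each statement's English description precedes it below -/
import Mathlib

section
/- Let A be a finite cyclic group, q a prime, and n = q^r (r ≥ 1) a divisor of |A|. Let γ be a character of A of order n. Then the multiset of characters {γ·χ : χ a character of A of order n} consists of exactly φ(q^k) distinct characters of order q^k for each 0 ≤ k ≤ r−1, together with exactly (q−2)·q^{r−1} distinct characters of order q^r; equivalently, writing ρ_d for the direct sum of all characters of A of order d, one has γ ⊗ ρ_n = ((q−2)/(q−1)) ρ_n ⊕ ⊕_{j=0}^{r−1} ρ_{q^j}. -/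
/-!
The characters of a finite cyclic group form a finite cyclic group, in which `γ` has order
`q ^ r`. If `y ^ q ^ (r - 1) = 1` then `γ⁻¹ * y` still has order `q ^ r`, so `χ ↦ γ * χ` maps the
characters `χ` of order `q ^ r` with `(γ * χ) ^ q ^ (r - 1) = 1` bijectively onto the
`q ^ (r - 1)`-torsion subgroup. That subgroup has `φ (q ^ k)` elements of order `q ^ k` for each
`k < r`, and the remaining `φ (q ^ r) - q ^ (r - 1) = (q - 2) * q ^ (r - 1)` characters `χ` of
order `q ^ r` are exactly those with `γ * χ` of order `q ^ r`.
-/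

lemma isCyclic_monoidHom_units (G M : Type*) [Group G] [Finite G] [IsCyclic G] [CommMonoid M]
    [HasEnoughRootsOfUnity M (Nat.card G)] : IsCyclic (G →* Mˣ) := by
  let _ := IsCyclic.commGroup (α := G)
  exact isCyclic_of_surjective _ (IsCyclic.monoidHom_equiv_self G M).some.symm.surjective

lemma Nat.card_subtype_and_add_card_subtype_and_not {α : Type*} [Finite α] (p r : α → Prop) :
    Nat.card {x // p x ∧ r x} + Nat.card {x // p x ∧ ¬r x} = Nat.card {x // p x} := by
  classical
  have := Fintype.ofFinite α
  simp only [Nat.card_eq_fintype_card, Fintype.card_subtype, ← Finset.filter_filter]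
  exact Finset.card_filter_add_card_filter_not _

section Cyclic

variable {G : Type*} [Finite G]

lemma IsCyclic.natCard_orderOf_eq_totient [Group G] [IsCyclic G] {d : ℕ} (hd : d ∣ Nat.card G) :
    Nat.card {x : G // orderOf x = d} = d.totient := by
  classical
  have := Fintype.ofFinite G
  rw [Nat.card_eq_fintype_card, Fintype.card_subtype]
  exact IsCyclic.card_orderOf_eq_totient (Nat.card_eq_fintype_card (α := G) ▸ hd)

lemma IsCyclic.natCard_pow_eq_one [CommGroup G] [IsCyclic G] {d : ℕ} (hd : d ∣ Nat.card G) :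
    Nat.card {x : G // x ^ d = 1} = d :=
  calc Nat.card {x : G // x ^ d = 1} = Nat.card (powMonoidHom d : G →* G).ker := rfl
    _ = d := by rw [IsCyclic.card_powMonoidHom_ker, Nat.gcd_eq_right hd]

end Cyclic

section PrimePowerOrder

variable {G : Type*} [CommGroup G] {q n : ℕ} [hq : Fact q.Prime] {g x : G}

lemma orderOf_eq_prime_pow_succ_iff (hx : x ^ q ^ (n + 1) = 1) :
    orderOf x = q ^ (n + 1) ↔ ¬x ^ q ^ n = 1 :=
  ⟨fun h ↦ pow_ne_one_of_lt_orderOf (pow_ne_zero n hq.out.ne_zero)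
    (h ▸ Nat.pow_lt_pow_right hq.out.one_lt n.lt_succ_self), fun h ↦ orderOf_eq_prime_pow h hx⟩

lemma orderOf_mul_eq_prime_pow_succ {y : G} (hx : orderOf x = q ^ (n + 1)) (hy : y ^ q ^ n = 1) :
    orderOf (x * y) = q ^ (n + 1) := by
  refine orderOf_eq_prime_pow ?_ ?_
  · rw [mul_pow, hy, mul_one, ← orderOf_eq_prime_pow_succ_iff (hx ▸ pow_orderOf_eq_one x)]
    exact hx
  · rw [mul_pow, ← hx, pow_orderOf_eq_one, one_mul, hx, pow_succ, pow_mul, hy, one_pow]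

lemma orderOf_eq_of_mul_pow_eq_one (hg : orderOf g = q ^ (n + 1)) (h : (g * x) ^ q ^ n = 1) :
    orderOf x = q ^ (n + 1) := by
  simpa using orderOf_mul_eq_prime_pow_succ ((orderOf_inv g).trans hg) h

lemma natCard_orderOf_eq_and_mul (hg : orderOf g = q ^ (n + 1)) (P : G → Prop)
    (hP : ∀ y, P y → y ^ q ^ n = 1) :
    Nat.card {x // orderOf x = q ^ (n + 1) ∧ P (g * x)} = Nat.card {y // P y} :=
  Nat.card_congr <| (Equiv.mulLeft g).subtypeEquiv fun _ ↦
    ⟨And.right, fun h ↦ ⟨orderOf_eq_of_mul_pow_eq_one hg (hP _ h), h⟩⟩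

variable [Finite G] [IsCyclic G]

lemma natCard_orderOf_mul_eq_prime_pow (hg : orderOf g = q ^ (n + 1)) {k : ℕ} (hk : k ≤ n) :
    Nat.card {x // orderOf x = q ^ (n + 1) ∧ orderOf (g * x) = q ^ k} = (q ^ k).totient := by
  rw [natCard_orderOf_eq_and_mul hg _ fun y (hy : orderOf y = q ^ k) ↦
      orderOf_dvd_iff_pow_eq_one.mp (hy ▸ pow_dvd_pow q hk),
    IsCyclic.natCard_orderOf_eq_totient
      ((pow_dvd_pow q (by omega)).trans (hg ▸ orderOf_dvd_natCard g))]

lemma natCard_orderOf_mul_eq_prime_pow_succ (hg : orderOf g = q ^ (n + 1)) :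
    Nat.card {x // orderOf x = q ^ (n + 1) ∧ orderOf (g * x) = q ^ (n + 1)} = (q - 2) * q ^ n := by
  have hdvd : q ^ (n + 1) ∣ Nat.card G := hg ▸ orderOf_dvd_natCard g
  have hsplit := Nat.card_subtype_and_add_card_subtype_and_not
    (fun x : G ↦ orderOf x = q ^ (n + 1)) (fun x ↦ (g * x) ^ q ^ n = 1)
  rw [natCard_orderOf_eq_and_mul hg _ fun _ ↦ id,
    IsCyclic.natCard_pow_eq_one ((pow_dvd_pow q n.le_succ).trans hdvd),
    IsCyclic.natCard_orderOf_eq_totient hdvd, Nat.totient_prime_pow_succ hq.out] at hsplit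
  have hcongr : Nat.card {x // orderOf x = q ^ (n + 1) ∧ orderOf (g * x) = q ^ (n + 1)} =
      Nat.card {x // orderOf x = q ^ (n + 1) ∧ ¬(g * x) ^ q ^ n = 1} :=
    Nat.card_congr <| Equiv.subtypeEquivRight fun x ↦ and_congr_right fun hx ↦
      orderOf_eq_prime_pow_succ_iff <| by
        rw [mul_pow, ← hx, pow_orderOf_eq_one, mul_one, hx, ← hg, pow_orderOf_eq_one]
  have := hq.out.two_le
  rw [hcongr]
  zify [this, (by omega : 1 ≤ q)] at hsplit ⊢
  linear_combination hsplit

end PrimePowerOrder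

theorem statement10_general (A : Type) [Group A] [IsCyclic A] [Finite A]
    (q r : ℕ) (hq : q.Prime) (hr : 1 ≤ r)
    (γ : A →* ℂˣ) (hγ : orderOf γ = q ^ r) :
    (∀ χ : A →* ℂˣ, orderOf χ = q ^ r → orderOf (γ * χ) ∣ q ^ r) ∧
      (∀ k : ℕ, k ≤ r - 1 →
        Nat.card {χ : A →* ℂˣ // orderOf χ = q ^ r ∧ orderOf (γ * χ) = q ^ k} =
          Nat.totient (q ^ k)) ∧
      Nat.card {χ : A →* ℂˣ // orderOf χ = q ^ r ∧ orderOf (γ * χ) = q ^ r} =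
        (q - 2) * q ^ (r - 1) := by
  have := Fact.mk hq
  have := isCyclic_monoidHom_units A ℂ
  obtain ⟨n, rfl⟩ : ∃ n, r = n + 1 := ⟨r - 1, by omega⟩
  rw [Nat.add_sub_cancel]
  refine ⟨fun χ hχ ↦ ?_, fun k hk ↦ natCard_orderOf_mul_eq_prime_pow hγ hk,
    natCard_orderOf_mul_eq_prime_pow_succ hγ⟩
  exact (Commute.all γ χ).orderOf_mul_dvd_lcm.trans (by rw [hγ, hχ, Nat.lcm_self])

/-- Let `A` be a finite cyclic group, `q` a prime and `n = q ^ r`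
(`r ≥ 1`) a divisor of `|A|`.  Let `γ` be a character of `A` of order `n`.  Then the
multiset `{γ * χ : χ of order n}` consists of exactly `φ (q ^ k)` distinct characters of
order `q ^ k` for each `0 ≤ k ≤ r - 1`, together with exactly `(q - 2) * q ^ (r - 1)`
distinct characters of order `q ^ r`; in particular every member has order dividing
`q ^ r`.  (Since `χ ↦ γ * χ` is injective, these multiset counts are cardinalities.) -/
theorem statement10 (A : Type) [Group A] [IsCyclic A] [Finite A]
    (q r : ℕ) (hq : q.Prime) (hr : 1 ≤ r) (hdvd : q ^ r ∣ Nat.card A)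
    (γ : A →* ℂˣ) (hγ : orderOf γ = q ^ r) :
    (∀ χ : A →* ℂˣ, orderOf χ = q ^ r → orderOf (γ * χ) ∣ q ^ r) ∧
      (∀ k : ℕ, k ≤ r - 1 →
        Nat.card {χ : A →* ℂˣ // orderOf χ = q ^ r ∧ orderOf (γ * χ) = q ^ k} =
          Nat.totient (q ^ k)) ∧
      Nat.card {χ : A →* ℂˣ // orderOf χ = q ^ r ∧ orderOf (γ * χ) = q ^ r} =
        (q - 2) * q ^ (r - 1) :=
  statement10_general A q r hq hr γ hγ
end

section
/- Let d, t be positive integers and A a finite cyclic group of order divisible by lcm(d, t). Let γ_t be a character of A of order t and ρ_d the direct sum of all characters of A of order d. Define A_{d,t} = {q prime : v_q(d) = v_q(t) > 0}, S_{d,t} = { lcm(d,t) / ∏_{q_i ∈ A_{d,t}} q_i^{m_i} : 0 ≤ m_i ≤ v_{q_i}(t) }, Q_{q,k}(s) = (q−2)/(q−1) if v_q(s) = k and 1 otherwise, and α_{d,t,s} = (φ(d)/φ(lcm(d,t))) · ∏_{q_i ∈ A_{d,t}} Q_{q_i, v_{q_i}(t)}(s). Then γ_t ⊗ ρ_d =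 ⊕_{s ∈ S_{d,t}} α_{d,t,s} ρ_s, i.e. for each s ∈ S_{d,t} the product characters γ_t·χ with χ of order d include exactly α_{d,t,s}·φ(s) characters of order s, and no other orders occur. -/
set_option synthInstance.maxHeartbeats 1000000
set_option maxHeartbeats 1000000

/-- The set `S_{d,t}`: `s' ∈ S_{d,t}` iff `s' = lcm (d, t) / ∏_{qᵢ ∈ A_{d,t}} qᵢ ^ mᵢ`
for some exponents `0 ≤ mᵢ ≤ v_{qᵢ} t`, where
`A_{d,t} = {q prime : v_q d = v_q t > 0}`. -/
def memS (d t s' : ℕ) : Prop :=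
  s' ∣ Nat.lcm d t ∧ ∀ q : ℕ, q.Prime →
    if d.factorization q = t.factorization q ∧ 0 < t.factorization q
    then (Nat.lcm d t).factorization q - t.factorization q ≤ s'.factorization q
    else s'.factorization q = (Nat.lcm d t).factorization q

/-- The multiplicity
`α_{d,t,s} = (φ d / φ (lcm d t)) · ∏_{qᵢ ∈ A_{d,t}} Q_{qᵢ, v_{qᵢ} t} (s)`, where
`Q_{q,k} (s) = (q-2)/(q-1)` if `v_q s = k` and `1` otherwise. -/
def alphaC (d t s' : ℕ) : ℚ :=
  (Nat.totient d : ℚ) / (Nat.totient (Nat.lcm d t) : ℚ) *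
    ∏ q ∈ t.primeFactors.filter (fun q => d.factorization q = t.factorization q),
      (if s'.factorization q = t.factorization q
       then ((q : ℚ) - 2) / ((q : ℚ) - 1) else 1)

/-!
The character group of `A` is cyclic of order `|A|`, so everything happens in `ZMod n`.
In an abelian group the orders `d, t, s` of `x, g, g + x` each divide the lcm of the other
two, and for `d, t ≠ 0` this is exactly `memS d t s`. Both the number of `x` of order `d` with
`g + x` of order `s` and `alphaC d t s * φ s` are multiplicative along the Chinese remainder
splitting `ZMod (n₁ * n₂) ≃ ZMod n₁ × ZMod n₂`, so it suffices to treat `d = q ^ b`,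
`t = q ^ a`, `s = q ^ c`. If `b ≠ a` then every `x` of order `q ^ b` has `g + x` of order
`q ^ max b a`, and if `c < a = b` then `g + x` of order `q ^ c` forces `x` to have order `q ^ a`.
In the remaining case `c = a = b > 0` the count is `φ (q ^ a)` minus the `q ^ (a - 1)`
elements `x` with `g + x` in the subgroup of order `q ^ (a - 1)`, that is
`φ (q ^ a) (q - 2) / (q - 1)`.
-/

open scoped Nat

theorem memS_iff_dvd_lcm {d t s : ℕ} (hd : d ≠ 0) (ht : t ≠ 0) :
    memS d t s ↔ s ∣ d.lcm t ∧ d ∣ t.lcm s ∧ t ∣ d.lcm s := by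
  refine and_congr_right fun hs => ?_
  have hs0 : s ≠ 0 := ne_zero_of_dvd_ne_zero (Nat.lcm_ne_zero hd ht) hs
  rw [← Nat.factorization_prime_le_iff_dvd hs0 (Nat.lcm_ne_zero hd ht)] at hs
  rw [← Nat.factorization_prime_le_iff_dvd hd (Nat.lcm_ne_zero ht hs0),
    ← Nat.factorization_prime_le_iff_dvd ht (Nat.lcm_ne_zero hd hs0), ← forall₂_and]
  refine forall₂_congr fun q hq => ?_
  specialize hs q hq
  simp only [Nat.factorization_lcm, *, Ne, not_false_eq_true, Finsupp.sup_apply] at hs ⊢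
  split_ifs <;> omega

theorem gcd_dvd_lcm_gcd_of_dvd_lcm {a b c n : ℕ} (ha : a ≠ 0) (hb : b ≠ 0) (hn : n ≠ 0)
    (h : c ∣ a.lcm b) : c.gcd n ∣ (a.gcd n).lcm (b.gcd n) := by
  have hc : c ≠ 0 := ne_zero_of_dvd_ne_zero (Nat.lcm_ne_zero ha hb) h
  rw [← Nat.factorization_prime_le_iff_dvd hc (Nat.lcm_ne_zero ha hb)] at h
  rw [← Nat.factorization_prime_le_iff_dvd (Nat.gcd_ne_zero_right hn)
    (Nat.lcm_ne_zero (Nat.gcd_ne_zero_right hn) (Nat.gcd_ne_zero_right hn))]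
  intro q hq
  specialize h q hq
  simp only [Nat.factorization_lcm, Nat.factorization_gcd, Finsupp.sup_apply, Finsupp.inf_apply,
    ne_eq, Nat.gcd_eq_zero_iff, *, and_false, not_false_eq_true] at h ⊢
  omega

theorem memS_gcd {d t s n : ℕ} (hd : d ≠ 0) (ht : t ≠ 0) (hn : n ≠ 0) (h : memS d t s) :
    memS (d.gcd n) (t.gcd n) (s.gcd n) := by
  have hs : s ≠ 0 := ne_zero_of_dvd_ne_zero (Nat.lcm_ne_zero hd ht) h.1
  obtain ⟨h₁, h₂, h₃⟩ := (memS_iff_dvd_lcm hd ht).1 h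
  exact (memS_iff_dvd_lcm (Nat.gcd_ne_zero_right hn) (Nat.gcd_ne_zero_right hn)).2
    ⟨gcd_dvd_lcm_gcd_of_dvd_lcm hd ht hn h₁, gcd_dvd_lcm_gcd_of_dvd_lcm ht hs hn h₂,
      gcd_dvd_lcm_gcd_of_dvd_lcm hd hs hn h₃⟩

theorem lcm_pow_pow (q b a : ℕ) : (q ^ b).lcm (q ^ a) = q ^ max b a := by
  rcases le_total b a with h | h
  · rw [max_eq_right h, Nat.lcm_eq_right (pow_dvd_pow q h)]
  · rw [max_eq_left h, Nat.lcm_eq_left (pow_dvd_pow q h)]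

theorem alphaC_prime_pow {q : ℕ} (hq : q.Prime) (b a c : ℕ) :
    alphaC (q ^ b) (q ^ a) (q ^ c) = φ (q ^ b) / φ (q ^ max b a) *
      if b = a ∧ c = a ∧ a ≠ 0 then ((q : ℚ) - 2) / ((q : ℚ) - 1) else 1 := by
  rw [alphaC, lcm_pow_pow]
  rcases eq_or_ne a 0 with rfl | ha
  · simp
  · rw [Nat.primeFactors_prime_pow ha hq, Finset.filter_singleton]
    by_cases hba : b = a <;> simp [hq.factorization_pow, ha, hba]

theorem lcm_mul_mul_of_coprime {n₁ n₂ a₁ a₂ b₁ b₂ : ℕ} (cop : n₁.Coprime n₂)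
    (ha₁ : a₁ ∣ n₁) (hb₁ : b₁ ∣ n₁) (ha₂ : a₂ ∣ n₂) (hb₂ : b₂ ∣ n₂) :
    (a₁ * a₂).lcm (b₁ * b₂) = a₁.lcm b₁ * a₂.lcm b₂ :=
  dvd_antisymm
    (Nat.lcm_dvd (mul_dvd_mul (Nat.dvd_lcm_left _ _) (Nat.dvd_lcm_left _ _))
      (mul_dvd_mul (Nat.dvd_lcm_right _ _) (Nat.dvd_lcm_right _ _)))
    ((Nat.Coprime.of_dvd (Nat.lcm_dvd ha₁ hb₁) (Nat.lcm_dvd ha₂ hb₂) cop).mul_dvd_of_dvd_of_dvd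
      (lcm_dvd_lcm (dvd_mul_right _ _) (dvd_mul_right _ _))
      (lcm_dvd_lcm (dvd_mul_left _ _) (dvd_mul_left _ _)))

theorem mul_eq_mul_iff_of_coprime {n₁ n₂ a₁ a₂ b₁ b₂ : ℕ} (cop : n₁.Coprime n₂)
    (ha₁ : a₁ ∣ n₁) (hb₁ : b₁ ∣ n₁) (ha₂ : a₂ ∣ n₂) (hb₂ : b₂ ∣ n₂) :
    a₁ * a₂ = b₁ * b₂ ↔ a₁ = b₁ ∧ a₂ = b₂ := by
  have key {m₁ m₂ x₁ x₂ : ℕ} (cop : m₁.Coprime m₂) (h₁ : x₁ ∣ m₁) (h₂ : x₂ ∣ m₂) :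
      (x₁ * x₂).gcd m₁ = x₁ := by
    rw [Nat.Coprime.gcd_mul_right_cancel _ (cop.symm.coprime_dvd_left h₂), Nat.gcd_eq_left h₁]
  refine ⟨fun h => ⟨?_, ?_⟩, fun h => h.1 ▸ h.2 ▸ rfl⟩
  · rw [← key cop ha₁ ha₂, h, key cop hb₁ hb₂]
  · rw [← key cop.symm ha₂ ha₁, mul_comm, h, mul_comm, key cop.symm hb₂ hb₁]

theorem gcd_mul_gcd_of_dvd_mul {n₁ n₂ m : ℕ} (cop : n₁.Coprime n₂) (hm : m ∣ n₁ * n₂) :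
    m.gcd n₁ * m.gcd n₂ = m := by
  rw [← cop.gcd_mul, Nat.gcd_eq_left hm]

theorem factorization_mul_of_prime_dvd_left {n₁ n₂ a₁ a₂ q : ℕ} (cop : n₁.Coprime n₂)
    (ha₁ : a₁ ∣ n₁) (ha₂ : a₂ ∣ n₂) (hq : q.Prime) (hqn : q ∣ n₁) :
    (a₁ * a₂).factorization q = a₁.factorization q := by
  have : ¬ q ∣ a₂ := fun h => hq.ne_one ((cop.coprime_dvd_left hqn).eq_one_of_dvd (h.trans ha₂))
  rw [Nat.factorization_mul_apply_of_coprime (Nat.Coprime.of_dvd ha₁ ha₂ cop),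
    Nat.factorization_eq_zero_of_not_dvd this, add_zero]

theorem alphaC_mul {n₁ n₂ d₁ d₂ t₁ t₂ s₁ s₂ : ℕ} (cop : n₁.Coprime n₂)
    (hd₁ : d₁ ∣ n₁) (ht₁ : t₁ ∣ n₁) (hs₁ : s₁ ∣ n₁) (hd₂ : d₂ ∣ n₂) (ht₂ : t₂ ∣ n₂)
    (hs₂ : s₂ ∣ n₂) :
    alphaC (d₁ * d₂) (t₁ * t₂) (s₁ * s₂) = alphaC d₁ t₁ s₁ * alphaC d₂ t₂ s₂ := by
  have hcop {a b : ℕ} (ha : a ∣ n₁) (hb : b ∣ n₂) : a.Coprime b := Nat.Coprime.of_dvd ha hb cop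
  have h₁ {q : ℕ} (hq : q ∈ t₁.primeFactors) {a₁ a₂ : ℕ} (ha₁ : a₁ ∣ n₁) (ha₂ : a₂ ∣ n₂) :
      (a₁ * a₂).factorization q = a₁.factorization q :=
    factorization_mul_of_prime_dvd_left cop ha₁ ha₂ (Nat.prime_of_mem_primeFactors hq)
      ((Nat.dvd_of_mem_primeFactors hq).trans ht₁)
  have h₂ {q : ℕ} (hq : q ∈ t₂.primeFactors) {a₁ a₂ : ℕ} (ha₁ : a₁ ∣ n₁) (ha₂ : a₂ ∣ n₂) :
      (a₁ * a₂).factorization q = a₂.factorization q := by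
    rw [mul_comm]
    exact factorization_mul_of_prime_dvd_left cop.symm ha₂ ha₁ (Nat.prime_of_mem_primeFactors hq)
      ((Nat.dvd_of_mem_primeFactors hq).trans ht₂)
  simp only [alphaC]
  rw [Nat.totient_mul (hcop hd₁ hd₂), lcm_mul_mul_of_coprime cop hd₁ ht₁ hd₂ ht₂,
    Nat.totient_mul (hcop (Nat.lcm_dvd hd₁ ht₁) (Nat.lcm_dvd hd₂ ht₂)),
    (hcop ht₁ ht₂).primeFactors_mul, Finset.filter_union,
    Finset.prod_union (Finset.disjoint_filter_filter (hcop ht₁ ht₂).disjoint_primeFactors)]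
  push_cast
  rw [mul_div_mul_comm, mul_mul_mul_comm]
  congr 2 <;> refine Finset.prod_congr (Finset.filter_congr fun q hq => ?_) fun q hq => ?_
  · rw [h₁ hq hd₁ hd₂, h₁ hq ht₁ ht₂]
  · rw [h₁ (Finset.mem_filter.1 hq).1 hs₁ hs₂, h₁ (Finset.mem_filter.1 hq).1 ht₁ ht₂]
  · rw [h₂ hq hd₁ hd₂, h₂ hq ht₁ ht₂]
  · rw [h₂ (Finset.mem_filter.1 hq).1 hs₁ hs₂, h₂ (Finset.mem_filter.1 hq).1 ht₁ ht₂]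

theorem memS_orderOf_mul {G : Type*} [CommGroup G] {γ χ : G} (hγ : IsOfFinOrder γ)
    (hχ : IsOfFinOrder χ) : memS (orderOf χ) (orderOf γ) (orderOf (γ * χ)) := by
  have hdvd {x y : G} : orderOf (x * y) ∣ (orderOf x).lcm (orderOf y) :=
    (Commute.all x y).orderOf_mul_dvd_lcm
  refine (memS_iff_dvd_lcm hχ.orderOf_pos.ne' hγ.orderOf_pos.ne').2 ⟨?_, ?_, ?_⟩
  · simpa [Nat.lcm_comm] using hdvd (x := γ) (y := χ)
  · simpa using hdvd (x := γ⁻¹) (y := γ * χ)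
  · simpa [orderOf_inv, Nat.lcm_comm] using hdvd (x := γ * χ) (y := χ⁻¹)

section Cyclic

variable {G : Type*} [AddCommGroup G]

theorem addOrderOf_add_eq_of_lt {q b c : ℕ} (hq : q.Prime) {x y : G}
    (hx : addOrderOf x = q ^ b) (hy : addOrderOf y = q ^ c) (hbc : b < c) :
    addOrderOf (x + y) = q ^ c := by
  rw [← hy]
  refine (AddCommute.all x y).addOrderOf_add_eq_right_of_forall_prime_mul_dvd
    (addOrderOf_pos_iff.mp (hy ▸ pow_pos hq.pos c)) fun p hp hpx => ?_
  rw [hx] at hpx ⊢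
  rw [(Nat.prime_dvd_prime_iff_eq hp hq).1 (hp.dvd_of_dvd_pow hpx), hy, ← pow_succ']
  exact pow_dvd_pow q hbc

theorem card_subtype_add_left (g : G) (p : G → Prop) :
    Nat.card {x : G // p (g + x)} = Nat.card {x : G // p x} :=
  Nat.card_congr ((Equiv.addLeft g).subtypeEquiv fun _ => Iff.rfl)

variable [Finite G] [IsAddCyclic G]

theorem card_addOrderOf_eq_totient {d : ℕ} (hd : d ∣ Nat.card G) :
    Nat.card {x : G // addOrderOf x = d} = φ d := by
  have := Fintype.ofFinite G
  classical
  rw [Nat.card_eq_fintype_card, Fintype.card_subtype]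
  exact IsAddCyclic.card_addOrderOf_eq_totient (Nat.card_eq_fintype_card (α := G) ▸ hd)

theorem card_addOrderOf_dvd {m : ℕ} (hm : m ∣ Nat.card G) :
    Nat.card {x : G // addOrderOf x ∣ m} = m := by
  calc Nat.card {x : G // addOrderOf x ∣ m} = Nat.card (nsmulAddMonoidHom m : G →+ G).ker :=
        Nat.card_congr (Equiv.subtypeEquivRight fun _ => addOrderOf_dvd_iff_nsmul_eq_zero)
    _ = m := by rw [IsAddCyclic.card_nsmulAddMonoidHom_ker, Nat.gcd_eq_right hm]

theorem card_addOrderOf_eq_and_add_eq_of_forall_left {g : G} {d s : ℕ} (hd : d ∣ Nat.card G)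
    (h : ∀ x : G, addOrderOf x = d → addOrderOf (g + x) = s) :
    Nat.card {x : G // addOrderOf x = d ∧ addOrderOf (g + x) = s} = φ d := by
  rw [← card_addOrderOf_eq_totient hd]
  exact Nat.card_congr (Equiv.subtypeEquivRight fun x => ⟨And.left, fun hx => ⟨hx, h x hx⟩⟩)

theorem card_addOrderOf_eq_and_add_eq_of_forall_right {g : G} {d s : ℕ} (hs : s ∣ Nat.card G)
    (h : ∀ x : G, addOrderOf (g + x) = s → addOrderOf x = d) :
    Nat.card {x : G // addOrderOf x = d ∧ addOrderOf (g + x) = s} = φ s := by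
  rw [← card_addOrderOf_eq_totient hs, ← card_subtype_add_left g (addOrderOf · = s)]
  exact Nat.card_congr (Equiv.subtypeEquivRight fun x => ⟨And.right, fun hx => ⟨h x hx, hx⟩⟩)

theorem card_addOrderOf_eq_and_add_eq_add_pow_pred {q a : ℕ} (hq : q.Prime) (ha : a ≠ 0)
    (hG : q ^ a ∣ Nat.card G) {g : G} (hg : addOrderOf g = q ^ a) :
    Nat.card {x : G // addOrderOf x = q ^ a ∧ addOrderOf (g + x) = q ^ a} + q ^ (a - 1) =
      φ (q ^ a) := by
  set P : Set G := {x | addOrderOf x = q ^ a}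
  set R : Set G := {x | addOrderOf (g + x) ∣ q ^ (a - 1)}
  have hR : R ⊆ P := fun x (hx : addOrderOf (g + x) ∣ q ^ (a - 1)) => by
    obtain ⟨j, hj, hgx⟩ := (Nat.dvd_prime_pow hq).1 hx
    have hg' : addOrderOf (-g) = q ^ a := by rw [addOrderOf_neg, hg]
    show addOrderOf x = q ^ a
    simpa using addOrderOf_add_eq_of_lt hq hgx hg' (by omega)
  have hPR : P \ R = {x | addOrderOf x = q ^ a ∧ addOrderOf (g + x) = q ^ a} := by
    ext x
    simp only [Set.mem_sdiff, Set.mem_ofPred_eq, P, R]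
    refine and_congr_right fun hx => ?_
    have hgx : addOrderOf (g + x) ∣ q ^ a := by
      simpa [hg, hx] using (AddCommute.all g x).addOrderOf_add_dvd_lcm
    obtain ⟨j, hj, hj'⟩ := (Nat.dvd_prime_pow hq).1 hgx
    rw [hj', Nat.pow_dvd_pow_iff_le_right hq.one_lt, Nat.pow_right_inj hq.two_le]
    omega
  have hcardR : R.ncard = q ^ (a - 1) := by
    rw [← Nat.card_coe_set_eq]
    exact (card_subtype_add_left g (addOrderOf · ∣ q ^ (a - 1))).trans
      (card_addOrderOf_dvd ((pow_dvd_pow q (a.sub_le 1)).trans hG))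
  have hcardP : P.ncard = φ (q ^ a) := by
    rw [← Nat.card_coe_set_eq]
    exact card_addOrderOf_eq_totient hG
  rw [← hcardR, ← hcardP, ← Set.ncard_sdiff_add_ncard_of_subset hR, hPR, ← Nat.card_coe_set_eq]
  rfl

theorem card_addOrderOf_eq_and_add_eq_of_prime_pow {q b a c : ℕ} (hq : q.Prime)
    (hb : q ^ b ∣ Nat.card G) {g : G} (hg : addOrderOf g = q ^ a)
    (hS : memS (q ^ b) (q ^ a) (q ^ c)) :
    (Nat.card {x : G // addOrderOf x = q ^ b ∧ addOrderOf (g + x) = q ^ c} : ℚ) =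
      alphaC (q ^ b) (q ^ a) (q ^ c) * φ (q ^ c) := by
  obtain ⟨hc, hb', ha'⟩ : c ≤ max b a ∧ b ≤ max a c ∧ a ≤ max b c := by
    simpa [memS_iff_dvd_lcm, hq.ne_zero, lcm_pow_pow, Nat.pow_dvd_pow_iff_le_right hq.one_lt] using hS
  have hneg : addOrderOf (-g) = q ^ a := by rw [addOrderOf_neg, hg]
  rw [alphaC_prime_pow hq]
  by_cases hba : b = a
  swap
  · have hc : c = max b a := by omega
    rw [card_addOrderOf_eq_and_add_eq_of_forall_left hb fun x hx => ?_, if_neg (by tauto),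
      mul_one, hc, div_mul_cancel₀]
    · exact_mod_cast (Nat.totient_pos.2 (pow_pos hq.pos _)).ne'
    rcases lt_or_gt_of_ne hba with hlt | hlt
    · rw [add_comm, addOrderOf_add_eq_of_lt hq hx hg hlt, hc, max_eq_right hlt.le]
    · rw [addOrderOf_add_eq_of_lt hq hg hx hlt, hc, max_eq_left hlt.le]
  subst hba
  by_cases hca : c = b ∧ b ≠ 0
  · obtain ⟨rfl, hc0⟩ := hca
    have hcount := card_addOrderOf_eq_and_add_eq_add_pow_pred hq hc0 hb hg
    have htot : (φ (q ^ c) : ℚ) = q ^ (c - 1) * (q - 1) := by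
      rw [Nat.totient_prime_pow hq (Nat.pos_of_ne_zero hc0)]
      push_cast [hq.one_le]
      ring
    have hq1 : (q : ℚ) - 1 ≠ 0 := sub_ne_zero.2 (by exact_mod_cast hq.ne_one)
    have hcount' : (Nat.card {x : G // addOrderOf x = q ^ c ∧ addOrderOf (g + x) = q ^ c} : ℚ) =
        φ (q ^ c) - q ^ (c - 1) := by
      rw [← hcount]; push_cast; ring
    rw [if_pos ⟨rfl, rfl, hc0⟩, max_self, div_self (by rw [htot]; simp [hq.ne_zero, hq1]),
      one_mul, hcount', htot]
    field_simp
    ring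
  · have hcG : q ^ c ∣ Nat.card G := (pow_dvd_pow q (by omega)).trans hb
    rw [card_addOrderOf_eq_and_add_eq_of_forall_right hcG fun x hx => ?_, if_neg (by tauto),
      max_self, mul_one, div_self, one_mul]
    · exact_mod_cast (Nat.totient_pos.2 (pow_pos hq.pos _)).ne'
    rcases Nat.eq_zero_or_pos b with rfl | hb0
    · obtain rfl : g = 0 := by simpa using hg
      simpa [show c = 0 by omega] using hx
    · simpa using addOrderOf_add_eq_of_lt hq hx hneg (by omega)

end Cyclic

theorem addOrderOf_prod_eq_mul_iff {G₁ G₂ : Type*} [AddGroup G₁] [AddGroup G₂] [Finite G₁]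
    [Finite G₂] (cop : (Nat.card G₁).Coprime (Nat.card G₂)) {d₁ d₂ : ℕ}
    (hd₁ : d₁ ∣ Nat.card G₁) (hd₂ : d₂ ∣ Nat.card G₂) (x : G₁ × G₂) :
    addOrderOf x = d₁ * d₂ ↔ addOrderOf x.1 = d₁ ∧ addOrderOf x.2 = d₂ := by
  rw [Prod.addOrderOf, (Nat.Coprime.of_dvd (addOrderOf_dvd_natCard _)
    (addOrderOf_dvd_natCard _) cop).lcm_eq_mul]
  exact mul_eq_mul_iff_of_coprime cop (addOrderOf_dvd_natCard _) hd₁ (addOrderOf_dvd_natCard _) hd₂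

theorem card_addOrderOf_eq_and_add_eq_prod {G₁ G₂ : Type*} [AddGroup G₁] [AddGroup G₂]
    [Finite G₁] [Finite G₂] (cop : (Nat.card G₁).Coprime (Nat.card G₂)) (g : G₁ × G₂)
    {d₁ d₂ s₁ s₂ : ℕ} (hd₁ : d₁ ∣ Nat.card G₁) (hd₂ : d₂ ∣ Nat.card G₂)
    (hs₁ : s₁ ∣ Nat.card G₁) (hs₂ : s₂ ∣ Nat.card G₂) :
    Nat.card {x : G₁ × G₂ // addOrderOf x = d₁ * d₂ ∧ addOrderOf (g + x) = s₁ * s₂} =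
      Nat.card {x : G₁ // addOrderOf x = d₁ ∧ addOrderOf (g.1 + x) = s₁} *
        Nat.card {x : G₂ // addOrderOf x = d₂ ∧ addOrderOf (g.2 + x) = s₂} := by
  rw [← Nat.card_prod]
  refine Nat.card_congr ((Equiv.subtypeEquivRight fun x => ?_).trans Equiv.subtypeProdEquivProd)
  rw [addOrderOf_prod_eq_mul_iff cop hd₁ hd₂, addOrderOf_prod_eq_mul_iff cop hs₁ hs₂,
    Prod.fst_add, Prod.snd_add]
  exact and_and_and_comm

theorem card_addOrderOf_eq_and_add_eq_congr {G H : Type*} [AddGroup G] [AddGroup H] (e : G ≃+ H)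
    (g : G) (d s : ℕ) :
    Nat.card {x : G // addOrderOf x = d ∧ addOrderOf (g + x) = s} =
      Nat.card {y : H // addOrderOf y = d ∧ addOrderOf (e g + y) = s} :=
  Nat.card_congr (e.toEquiv.subtypeEquiv fun x => by
    change _ ↔ addOrderOf (e x) = d ∧ addOrderOf (e g + e x) = s
    rw [← map_add, e.addOrderOf_eq, e.addOrderOf_eq])

theorem ZMod.card_addOrderOf_eq_and_add_eq {n : ℕ} (hn : n ≠ 0) (g : ZMod n) {d s : ℕ}
    (hd : d ∣ n) (hS : memS d (addOrderOf g) s) :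
    (Nat.card {x : ZMod n // addOrderOf x = d ∧ addOrderOf (g + x) = s} : ℚ) =
      alphaC d (addOrderOf g) s * φ s := by
  have hord {m : ℕ} (hm : m ≠ 0) (y : ZMod m) : addOrderOf y ∣ m := by
    have := NeZero.mk hm
    simpa using addOrderOf_dvd_natCard y
  have hs : s ∣ n := hS.1.trans (Nat.lcm_dvd hd (hord hn g))
  induction n using Nat.recOnPrimeCoprime generalizing d s with
  | zero => exact absurd rfl hn
  | prime_pow q k hq =>
    have := NeZero.mk hn
    have hpow {m : ℕ} (hm : m ∣ q ^ k) : ∃ i, m = q ^ i :=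
      let ⟨i, _, hi⟩ := (Nat.dvd_prime_pow hq).1 hm; ⟨i, hi⟩
    obtain ⟨b, rfl⟩ := hpow hd
    obtain ⟨c, rfl⟩ := hpow hs
    obtain ⟨a, ha⟩ := hpow (hord hn g)
    rw [ha] at hS ⊢
    exact card_addOrderOf_eq_and_add_eq_of_prime_pow hq (by rwa [Nat.card_zmod]) ha hS
  | coprime n₁ n₂ h₁ h₂ cop ih₁ ih₂ =>
    have : NeZero n₁ := ⟨by omega⟩
    have : NeZero n₂ := ⟨by omega⟩
    have cop' : (Nat.card (ZMod n₁)).Coprime (Nat.card (ZMod n₂)) := by simpa using cop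
    have hdvd₁ (m : ℕ) : m.gcd n₁ ∣ Nat.card (ZMod n₁) := by simpa using Nat.gcd_dvd_right m n₁
    have hdvd₂ (m : ℕ) : m.gcd n₂ ∣ Nat.card (ZMod n₂) := by simpa using Nat.gcd_dvd_right m n₂
    set e := (ZMod.chineseRemainder cop).toAddEquiv
    set t := addOrderOf g
    obtain ⟨ht₁, ht₂⟩ := (addOrderOf_prod_eq_mul_iff cop' (hdvd₁ t) (hdvd₂ t) (e g)).1 (by
      rw [e.addOrderOf_eq, gcd_mul_gcd_of_dvd_mul cop (hord hn g)])
    have hd0 : d ≠ 0 := ne_zero_of_dvd_ne_zero hn hd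
    have ht0 : t ≠ 0 := ne_zero_of_dvd_ne_zero hn (hord hn g)
    have hS₁ : memS (d.gcd n₁) (addOrderOf (e g).1) (s.gcd n₁) :=
      ht₁ ▸ memS_gcd hd0 ht0 (by omega) hS
    have hS₂ : memS (d.gcd n₂) (addOrderOf (e g).2) (s.gcd n₂) :=
      ht₂ ▸ memS_gcd hd0 ht0 (by omega) hS
    calc (Nat.card {x // addOrderOf x = d ∧ addOrderOf (g + x) = s} : ℚ)
        = Nat.card {x : ZMod n₁ // addOrderOf x = d.gcd n₁ ∧
              addOrderOf ((e g).1 + x) = s.gcd n₁} *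
            Nat.card {x : ZMod n₂ // addOrderOf x = d.gcd n₂ ∧
              addOrderOf ((e g).2 + x) = s.gcd n₂} := by
          rw [card_addOrderOf_eq_and_add_eq_congr e, ← Nat.cast_mul,
            ← card_addOrderOf_eq_and_add_eq_prod cop' (e g) (hdvd₁ d) (hdvd₂ d) (hdvd₁ s) (hdvd₂ s),
            gcd_mul_gcd_of_dvd_mul cop hd, gcd_mul_gcd_of_dvd_mul cop hs]
      _ = alphaC (d.gcd n₁) (t.gcd n₁) (s.gcd n₁) * φ (s.gcd n₁) *
            (alphaC (d.gcd n₂) (t.gcd n₂) (s.gcd n₂) * φ (s.gcd n₂)) := by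
          rw [ih₁ (by omega) (e g).1 (Nat.gcd_dvd_right d n₁) hS₁ (Nat.gcd_dvd_right s n₁),
            ih₂ (by omega) (e g).2 (Nat.gcd_dvd_right d n₂) hS₂ (Nat.gcd_dvd_right s n₂), ht₁, ht₂]
      _ = alphaC d t s * φ s := by
          rw [mul_mul_mul_comm, ← alphaC_mul cop (Nat.gcd_dvd_right d n₁) (Nat.gcd_dvd_right t n₁)
            (Nat.gcd_dvd_right s n₁) (Nat.gcd_dvd_right d n₂) (Nat.gcd_dvd_right t n₂)
            (Nat.gcd_dvd_right s n₂), ← Nat.cast_mul, ← Nat.totient_mul (Nat.Coprime.of_dvd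
              (Nat.gcd_dvd_right s n₁) (Nat.gcd_dvd_right s n₂) cop),
            gcd_mul_gcd_of_dvd_mul cop hd, gcd_mul_gcd_of_dvd_mul cop (hord hn g),
            gcd_mul_gcd_of_dvd_mul cop hs]

theorem IsCyclic.card_orderOf_eq_and_mul_eq {G : Type*} [CommGroup G] [IsCyclic G] [Finite G]
    (γ : G) {d s : ℕ} (hd : d ∣ Nat.card G) (hS : memS d (orderOf γ) s) :
    (Nat.card {χ : G // orderOf χ = d ∧ orderOf (γ * χ) = s} : ℚ) =
      alphaC d (orderOf γ) s * φ s := by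
  let e : G ≃* Multiplicative (ZMod (Nat.card G)) := mulEquivOfCyclicCardEq (by simp)
  have hord (χ : G) : orderOf χ = addOrderOf (e χ).toAdd := by
    rw [← e.orderOf_eq, ← orderOf_ofAdd_eq_addOrderOf]
    rfl
  rw [hord] at hS ⊢
  rw [← ZMod.card_addOrderOf_eq_and_add_eq Nat.card_pos.ne' _ hd hS]
  exact congrArg _ (Nat.card_congr ((e.toEquiv.trans Multiplicative.toAdd).subtypeEquiv
    fun χ => by simp [hord]))

theorem statement11_general (A : Type) [Group A] [IsCyclic A] [Finite A]
    (d t : ℕ) (hdvd : Nat.lcm d t ∣ Nat.card A)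
    (γ : A →* ℂˣ) (hγ : orderOf γ = t) :
    (∀ χ : A →* ℂˣ, orderOf χ = d → memS d t (orderOf (γ * χ))) ∧
      ∀ s : ℕ, memS d t s →
        (Nat.card {χ : A →* ℂˣ // orderOf χ = d ∧ orderOf (γ * χ) = s} : ℚ) =
          alphaC d t s * (Nat.totient s : ℚ) := by
  let : CommGroup A := IsCyclic.commGroup
  obtain ⟨e⟩ := CommGroup.monoidHom_mulEquiv_of_hasEnoughRootsOfUnity A ℂ
  have : Finite (A →* ℂˣ) := Finite.of_equiv A e.symm.toEquiv
  have : IsCyclic (A →* ℂˣ) := isCyclic_of_surjective e.symm.toMonoidHom e.symm.surjective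
  subst hγ
  refine ⟨fun χ hχ => hχ ▸ memS_orderOf_mul (isOfFinOrder_of_finite γ) (isOfFinOrder_of_finite χ),
    fun s hs => IsCyclic.card_orderOf_eq_and_mul_eq γ ?_ hs⟩
  rw [Nat.card_congr e.toEquiv]
  exact (Nat.dvd_lcm_left _ _).trans hdvd

/-- Let `d, t` be positive integers and `A` a finite cyclic group of
order divisible by `lcm (d, t)`.  Let `γ` be a character of `A` of order `t` and consider
the products `γ * χ` with `χ` of order `d` (the decomposition of `γ_t ⊗ ρ_d`).  Every
product has order lying in `S_{d,t}`, and for each `s ∈ S_{d,t}` there are exactly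
`α_{d,t,s} · φ s` products of order `s`. -/
theorem statement11 (A : Type) [Group A] [IsCyclic A] [Finite A]
    (d t : ℕ) (hd : 0 < d) (ht : 0 < t) (hdvd : Nat.lcm d t ∣ Nat.card A)
    (γ : A →* ℂˣ) (hγ : orderOf γ = t) :
    (∀ χ : A →* ℂˣ, orderOf χ = d → memS d t (orderOf (γ * χ))) ∧
      ∀ s : ℕ, memS d t s →
        (Nat.card {χ : A →* ℂˣ // orderOf χ = d ∧ orderOf (γ * χ) = s} : ℚ) =
          alphaC d t s * (Nat.totient s : ℚ) :=
  statement11_general A d t hdvd γ hγ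
end

section
/- Let d and n be positive integers, χ a character of the cyclic group C_d of order exactly d, and g = gcd(n, d^∞). Then the induced representation Ind_{C_d}^{C_{dn}} χ (along the inclusion of C_d as the index-n subgroup of C_{dn}) decomposes as a direct sum of one-dimensional characters consisting of exactly g·φ(n₁) distinct characters of order d·g·n₁, for each positive divisor n₁ of n/g, and nothing else. -/
set_option synthInstance.maxHeartbeats 1000000
set_option maxHeartbeats 1000000

/-- `gcd (n, d^∞) = lim_k gcd (n, d^k)`: the largest divisor of `n` all of whose prime
factors divide `d`. -/
def gcdPow (n d : ℕ) : ℕ :=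
  ∏ q ∈ n.primeFactors.filter (fun q => q ∣ d), q ^ n.factorization q

/-
Fix a generator `x` of `G`. A character `ψ` of `G` is determined by `ζ = ψ x`, subject only to
`ζ ^ (d * n) = 1`, and `H` is generated by `x ^ n`; so `ψ` restricts to `χ` exactly when
`ζ ^ n = ω := χ (x ^ n)`, an element of order `d`. If `ζ` has order `m` then
`m / gcd m n = d`, so `m = d * t` with `t = gcd m n` and `d` coprime to `n / t`; minimality of
`g = gcd (n, d^∞)` gives `g ∣ t`, i.e. `m = d * g * n₁` with `n₁ ∣ n / g`.

For the count write `t = g * n₁` and `n = t * k`, so that `k` is prime to `d`. Parametrising the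
elements of order `d * t` by `(ZMod (d * t))ˣ`, the condition `ζ ^ (t * k) = ω` cuts out a fibre
of the surjective reduction `(ZMod (d * t))ˣ → (ZMod d)ˣ`, which has `φ (d * t) / φ d` elements.
Since every prime factor of `g` divides `d`, this is `g * φ n₁`.
-/

open scoped Nat

namespace Nat

theorem totient_mul_of_forall_prime_dvd {a b : ℕ} (h : ∀ p, p.Prime → p ∣ a → p ∣ b) :
    φ (a * b) = a * φ b := by
  rcases eq_or_ne a 0 with rfl | ha
  · simp
  rcases eq_or_ne b 0 with rfl | hb
  · simp
  have hfac : (a * b).primeFactors = b.primeFactors := by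
    rw [primeFactors_mul ha hb, Finset.union_eq_right]
    intro p hp
    exact mem_primeFactors.mpr ⟨prime_of_mem_primeFactors hp,
      h p (prime_of_mem_primeFactors hp) (dvd_of_mem_primeFactors hp), hb⟩
  have hP : 0 < ∏ p ∈ b.primeFactors, p := Finset.prod_pos fun p hp => pos_of_mem_primeFactors hp
  apply Nat.eq_of_mul_eq_mul_right hP
  have hab := totient_mul_prod_primeFactors (a * b)
  rw [hfac] at hab
  rw [hab, mul_assoc, mul_assoc, totient_mul_prod_primeFactors]

end Nat

section GcdPow

variable {n d : ℕ}

theorem gcdPow_pos (n d : ℕ) : 0 < gcdPow n d :=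
  Finset.prod_pos fun _ hq =>
    pow_pos (Nat.pos_of_mem_primeFactors (Finset.mem_filter.mp hq).1) _

theorem gcdPow_mul_prod_filter_not (hn : n ≠ 0) :
    gcdPow n d * ∏ q ∈ n.primeFactors.filter (fun q => ¬ q ∣ d), q ^ n.factorization q = n := by
  rw [gcdPow, Finset.prod_filter_mul_prod_filter_not]
  exact Nat.prod_factorization_pow_eq_self hn

theorem gcdPow_dvd_self (n d : ℕ) : gcdPow n d ∣ n := by
  rcases eq_or_ne n 0 with rfl | hn
  · exact dvd_zero _
  · exact ⟨_, (gcdPow_mul_prod_filter_not hn).symm⟩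

theorem coprime_div_gcdPow (hn : n ≠ 0) : (n / gcdPow n d).Coprime d := by
  rw [Nat.div_eq_of_eq_mul_right (gcdPow_pos n d) (gcdPow_mul_prod_filter_not hn).symm,
    Nat.coprime_prod_left_iff]
  intro q hq
  rw [Finset.mem_filter] at hq
  exact ((Nat.prime_of_mem_primeFactors hq.1).coprime_iff_not_dvd.mpr hq.2).pow_left _

theorem Nat.Prime.dvd_of_dvd_gcdPow {p : ℕ} (hp : p.Prime) (h : p ∣ gcdPow n d) : p ∣ d := by
  obtain ⟨q, hq, hpq⟩ := (Prime.dvd_finsetProd_iff hp.prime _).mp h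
  rw [Finset.mem_filter] at hq
  rw [(Nat.prime_dvd_prime_iff_eq hp (Nat.prime_of_mem_primeFactors hq.1)).mp
    (hp.dvd_of_dvd_pow hpq)]
  exact hq.2

theorem coprime_gcdPow_of_coprime {m : ℕ} (hm : d.Coprime m) : (gcdPow n d).Coprime m :=
  Nat.coprime_of_dvd fun _ hp hpg hpm =>
    hp.one_lt.ne' (Nat.eq_one_of_dvd_coprimes hm (hp.dvd_of_dvd_gcdPow hpg) hpm)

theorem gcdPow_dvd_of_coprime_div {t : ℕ} (htn : t ∣ n) (h : d.Coprime (n / t)) :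
    gcdPow n d ∣ t :=
  (coprime_gcdPow_of_coprime h).dvd_of_dvd_mul_right
    (by rw [Nat.mul_div_cancel' htn]; exact gcdPow_dvd_self n d)

theorem exists_dvd_div_gcdPow_of_div_gcd_eq {m : ℕ} (hn : n ≠ 0) (h : m / m.gcd n = d) :
    ∃ n₁, n₁ ∣ n / gcdPow n d ∧ m = d * gcdPow n d * n₁ := by
  set t := m.gcd n
  have ht : 0 < t := Nat.gcd_pos_of_pos_right m (Nat.pos_of_ne_zero hn)
  have hm : m = d * t := by rw [← h, Nat.div_mul_cancel (Nat.gcd_dvd_left m n)]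
  have hcop : d.Coprime (n / t) := by
    have : t * (d.gcd (n / t)) = t * 1 := by
      rw [← Nat.gcd_mul_left, mul_comm t d, ← hm, Nat.mul_div_cancel' (Nat.gcd_dvd_right m n),
        mul_one]
    exact Nat.eq_of_mul_eq_mul_left ht this
  have hg := gcdPow_dvd_of_coprime_div (Nat.gcd_dvd_right m n) hcop
  exact ⟨t / gcdPow n d, Nat.div_dvd_div hg (Nat.gcd_dvd_right m n),
    by rw [mul_assoc, Nat.mul_div_cancel' hg]; exact hm⟩

theorem totient_mul_gcdPow_mul {n₁ : ℕ} (hn : n ≠ 0) (hn₁ : n₁ ∣ n / gcdPow n d) :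
    φ (d * gcdPow n d * n₁) = gcdPow n d * φ n₁ * φ d := by
  have hn₁d : n₁.Coprime d := (coprime_div_gcdPow hn).coprime_dvd_left hn₁
  have hcop : (gcdPow n d * d).Coprime n₁ :=
    (coprime_gcdPow_of_coprime hn₁d.symm).mul_left hn₁d.symm
  rw [mul_comm d, Nat.totient_mul hcop,
    Nat.totient_mul_of_forall_prime_dvd fun p hp => hp.dvd_of_dvd_gcdPow]
  ring

theorem gcdPow_mul_dvd {n₁ : ℕ} (hn₁ : n₁ ∣ n / gcdPow n d) : gcdPow n d * n₁ ∣ n := by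
  simpa [Nat.mul_div_cancel' (gcdPow_dvd_self n d)] using mul_dvd_mul_left (gcdPow n d) hn₁

end GcdPow

theorem exists_orderOf_eq_of_pow_eq {M : Type*} [Monoid M] {ζ ω : M} {d n : ℕ} (hd : 0 < d)
    (hn : n ≠ 0) (hζ : ζ ^ n = ω) (hω : orderOf ω = d) :
    ∃ n₁, n₁ ∣ n / gcdPow n d ∧ orderOf ζ = d * gcdPow n d * n₁ := by
  have hfin : IsOfFinOrder ζ := isOfFinOrder_iff_pow_eq_one.mpr
    ⟨n * d, Nat.mul_pos (Nat.pos_of_ne_zero hn) hd, by rw [pow_mul, hζ, ← hω, pow_orderOf_eq_one]⟩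
  exact exists_dvd_div_gcdPow_of_div_gcd_eq hn (by rw [← hfin.orderOf_pow, hζ, hω])

theorem MonoidHom.card_preimage_singleton_mul_card {G M : Type*} [Group G] [Group M] [Finite G]
    {f : G →* M} (hf : Function.Surjective f) (y : M) :
    Nat.card (f ⁻¹' {y}) * Nat.card M = Nat.card G := by
  rw [Nat.card_congr (f.fiberEquivKerOfSurjective hf y), ← f.ker.card_mul_index,
    Subgroup.index_ker, f.range_eq_top.mpr hf, Subgroup.card_top]

namespace IsPrimitiveRoot

theorem orderOf_pow_val_units {M : Type*} [CommMonoid M] {m : ℕ} {ξ : M}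
    (hξ : IsPrimitiveRoot ξ m) (u : (ZMod m)ˣ) : orderOf (ξ ^ (u : ZMod m).val) = m :=
  (hξ.pow_of_coprime _ (ZMod.val_coe_unit_coprime u)).eq_orderOf.symm

theorem pow_val_units_injective {M : Type*} [CommMonoid M] {m : ℕ} [NeZero m] {ξ : M}
    (hξ : IsPrimitiveRoot ξ m) : Function.Injective fun u : (ZMod m)ˣ => ξ ^ (u : ZMod m).val :=
  fun _ _ h => Units.ext (ZMod.val_injective m (hξ.pow_inj (ZMod.val_lt _) (ZMod.val_lt _) h))

variable {R : Type*} [CommRing R] [IsDomain R] {m : ℕ} [NeZero m] {ξ : Rˣ}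

theorem exists_pow_val_units_eq (hξ : IsPrimitiveRoot ξ m) {ζ : Rˣ} (hζ : orderOf ζ = m) :
    ∃ u : (ZMod m)ˣ, ξ ^ (u : ZMod m).val = ζ := by
  have hζm : (ζ : R) ^ m = 1 := by
    rw [← Units.val_pow_eq_pow_val, ← hζ, pow_orderOf_eq_one, Units.val_one]
  obtain ⟨i, hi, hξi⟩ := (coe_units_iff.mpr hξ).eq_pow_of_pow_eq_one hζm
  replace hξi : ξ ^ i = ζ := Units.ext (by rw [Units.val_pow_eq_pow_val, hξi])
  have hcop : i.Coprime m :=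
    (hξ.pow_iff_coprime (NeZero.pos m) i).mp (hξi ▸ IsPrimitiveRoot.iff_orderOf.mpr hζ)
  exact ⟨ZMod.unitOfCoprime i hcop, by rw [ZMod.coe_unitOfCoprime, ZMod.val_natCast_of_lt hi, hξi]⟩

theorem card_subtype_and_orderOf_eq (hξ : IsPrimitiveRoot ξ m) (P : Rˣ → Prop) :
    Nat.card {ζ : Rˣ // P ζ ∧ orderOf ζ = m} =
      Nat.card {u : (ZMod m)ˣ // P (ξ ^ (u : ZMod m).val)} := by
  refine Nat.card_congr (Equiv.ofBijective (fun u => ⟨ξ ^ (u.1 : ZMod m).val, u.2,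
    hξ.orderOf_pow_val_units u.1⟩) ⟨fun _ _ h => ?_, fun ζ => ?_⟩).symm
  · exact Subtype.ext (hξ.pow_val_units_injective (congrArg Subtype.val h))
  · obtain ⟨u, hu⟩ := hξ.exists_pow_val_units_eq ζ.2.2
    exact ⟨⟨u, hu ▸ ζ.2.1⟩, Subtype.ext hu⟩

end IsPrimitiveRoot

theorem card_pow_eq_and_orderOf_eq_mul_totient {R : Type*} [CommRing R] [IsDomain R]
    {d t k : ℕ} [NeZero d] [NeZero t] (hk : k.Coprime d) {ω ξ : Rˣ} (hω : orderOf ω = d)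
    (hξ : IsPrimitiveRoot ξ (d * t)) :
    Nat.card {ζ : Rˣ // ζ ^ (t * k) = ω ∧ orderOf ζ = d * t} * φ d = φ (d * t) := by
  have hη : IsPrimitiveRoot (ξ ^ t) d := hξ.pow (NeZero.pos _) (mul_comm d t)
  obtain ⟨v, rfl⟩ := hη.exists_pow_val_units_eq hω
  set f := ZMod.unitsMap (dvd_mul_right d t)
  have hfiber : ∀ u : (ZMod (d * t))ˣ,
      (ξ ^ (u : ZMod (d * t)).val) ^ (t * k) = (ξ ^ t) ^ (v : ZMod d).val ↔
        u ∈ f ⁻¹' {v * (ZMod.unitOfCoprime k hk)⁻¹} := by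
    intro u
    rw [← pow_mul, mul_left_comm, pow_mul, pow_eq_pow_iff_modEq,
      ← hη.eq_orderOf, ← ZMod.natCast_eq_natCast_iff, ZMod.natCast_zmod_val, Nat.cast_mul,
      ZMod.natCast_val, Set.mem_preimage, Set.mem_singleton_iff, eq_mul_inv_iff_mul_eq,
      Units.ext_iff, Units.val_mul, ZMod.coe_unitOfCoprime]
    rfl
  rw [hξ.card_subtype_and_orderOf_eq, Nat.card_congr (Equiv.subtypeEquivRight hfiber),
    ← ZMod.card_units_eq_totient, ← ZMod.card_units_eq_totient, ← Nat.card_eq_fintype_card,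
    ← Nat.card_eq_fintype_card]
  exact MonoidHom.card_preimage_singleton_mul_card (ZMod.unitsMap_surjective _) _

theorem card_pow_eq_and_orderOf_eq_gcdPow {R : Type*} [CommRing R] [IsDomain R] {d n n₁ : ℕ}
    [NeZero d] (hn : n ≠ 0) (hn₁ : n₁ ∣ n / gcdPow n d) {ω ξ : Rˣ} (hω : orderOf ω = d)
    (hξ : IsPrimitiveRoot ξ (d * gcdPow n d * n₁)) :
    Nat.card {ζ : Rˣ // ζ ^ n = ω ∧ orderOf ζ = d * gcdPow n d * n₁} = gcdPow n d * φ n₁ := by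
  have htn := gcdPow_mul_dvd hn₁
  have : NeZero (gcdPow n d * n₁) := ⟨fun h => hn (Nat.eq_zero_of_zero_dvd (h ▸ htn))⟩
  have hk : (n / (gcdPow n d * n₁)).Coprime d :=
    (coprime_div_gcdPow hn).coprime_dvd_left <| Dvd.intro_left n₁ <|
      (Nat.div_eq_of_eq_mul_right (gcdPow_pos n d)
        (by rw [← mul_assoc, Nat.mul_div_cancel' htn])).symm
  rw [mul_assoc] at hξ
  have key := card_pow_eq_and_orderOf_eq_mul_totient hk hω hξ
  rw [Nat.mul_div_cancel' htn, ← mul_assoc, totient_mul_gcdPow_mul hn hn₁] at key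
  exact Nat.eq_of_mul_eq_mul_right (Nat.totient_pos.mpr (NeZero.pos d)) key

section CyclicCharacters

open Subgroup

variable {G M : Type*} [Group G] {x : G}

theorem Subgroup.mem_zpowers_mk_self (g : G) (y : zpowers g) :
    y ∈ zpowers (⟨g, mem_zpowers g⟩ : zpowers g) := by
  obtain ⟨j, hj⟩ := mem_zpowers_iff.mp y.2
  exact mem_zpowers_iff.mpr ⟨j, Subtype.ext hj⟩

theorem Subgroup.eq_zpowers_pow_of_card [Finite G] (hx : ∀ y, y ∈ zpowers x) {d n : ℕ}
    (hxn : orderOf x = d * n) (hn : 0 < n) {H : Subgroup G} (hH : Nat.card H = d) :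
    H = zpowers (x ^ n) := by
  have hd : (d : ℤ) ≠ 0 := by
    have := hxn ▸ orderOf_pos x
    exact_mod_cast (Nat.pos_of_mul_pos_right this).ne'
  have hcard : Nat.card (zpowers (x ^ n)) = d := by
    rw [Nat.card_zpowers, orderOf_pow_of_dvd hn.ne' (hxn ▸ dvd_mul_left n d), hxn,
      Nat.mul_div_cancel _ hn]
  refine eq_of_le_of_card_ge (fun y hy => ?_) (hcard.trans hH.symm).le
  obtain ⟨j, rfl⟩ := mem_zpowers_iff.mp (hx y)
  have hjd : x ^ (j * d) = 1 := by
    rw [zpow_mul, zpow_natCast, ← hH]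
    exact orderOf_dvd_iff_pow_eq_one.mp (orderOf_dvd_natCard H hy)
  obtain ⟨i, rfl⟩ : (n : ℤ) ∣ j := by
    refine Int.dvd_of_mul_dvd_mul_right hd ?_
    rw [mul_comm (n : ℤ), ← Nat.cast_mul, ← hxn]
    exact orderOf_dvd_iff_zpow_eq_one.mpr hjd
  exact mem_zpowers_iff.mpr ⟨i, by rw [zpow_mul, zpow_natCast]⟩

theorem MonoidHom.orderOf_eq_orderOf_apply_gen [CommGroup M] (hx : ∀ y, y ∈ zpowers x)
    (ψ : G →* M) : orderOf ψ = orderOf (ψ x) :=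
  (orderOf_injective (MonoidHom.eval x) (fun _ _ h => (eq_iff_eq_on_generator hx _ _).mpr h)
    ψ).symm

theorem MonoidHom.comp_subtype_zpowers_eq_iff [Group M] (g : G) (ψ : G →* M)
    (χ : zpowers g →* M) :
    ψ.comp (zpowers g).subtype = χ ↔ ψ g = χ ⟨g, mem_zpowers g⟩ :=
  eq_iff_eq_on_generator (Subgroup.mem_zpowers_mk_self g) _ _

theorem MonoidHom.card_subtype_apply_gen [Group M] (hx : ∀ y, y ∈ zpowers x) (P : M → Prop)
    (hP : ∀ ζ, P ζ → ζ ^ orderOf x = 1) :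
    Nat.card {ψ : G →* M // P (ψ x)} = Nat.card {ζ : M // P ζ} := by
  refine Nat.card_congr (Equiv.ofBijective (fun ψ => ⟨ψ.1 x, ψ.2⟩) ⟨fun _ _ h => ?_, fun ζ => ?_⟩)
  · exact Subtype.ext ((eq_iff_eq_on_generator hx _ _).mpr (congrArg Subtype.val h))
  · have hζ := orderOf_dvd_of_pow_eq_one (hP ζ.1 ζ.2)
    refine ⟨⟨monoidHomOfForallMemZpowers hx hζ, ?_⟩, Subtype.ext ?_⟩ <;>
      simp only [monoidHomOfForallMemZpowers_apply_gen, ζ.2]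

end CyclicCharacters

/-- Let `d, n` be positive integers, `χ` a character of the cyclic group
`C_d` of order exactly `d`, and `g = gcd (n, d^∞)`.  Then the induced representation
`Ind_{C_d}^{C_{dn}} χ` consists of exactly `g · φ n₁` distinct characters of order
`d · g · n₁` for each positive divisor `n₁` of `n / g`, and nothing else.  (Here `C_{dn}`
is modelled by a cyclic group `G` of order `d * n`, `C_d` by its subgroup `H` of order
`d`, and — by Frobenius reciprocity for abelian groups — the constituents of `Ind χ` are
exactly the characters `ψ` of `G` with `ψ∣_H = χ`, each occurring once.) -/
theorem statement12 (G : Type) [Group G] [IsCyclic G] [Finite G]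
    (d n : ℕ) (hd : 0 < d) (hn : 0 < n) (hG : Nat.card G = d * n)
    (H : Subgroup G) (hH : Nat.card ↥H = d)
    (χ : ↥H →* ℂˣ) (hχ : orderOf χ = d) :
    (∀ ψ : G →* ℂˣ, ψ.comp H.subtype = χ →
        ∃ n₁ : ℕ, n₁ ∣ n / gcdPow n d ∧ orderOf ψ = d * gcdPow n d * n₁) ∧
      ∀ n₁ : ℕ, n₁ ∣ n / gcdPow n d →
        Nat.card {ψ : G →* ℂˣ // ψ.comp H.subtype = χ ∧ orderOf ψ = d * gcdPow n d * n₁} =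
          gcdPow n d * Nat.totient n₁ := by
  obtain ⟨x, hx⟩ := IsCyclic.exists_generator (α := G)
  have hxN : orderOf x = d * n := (orderOf_eq_card_of_forall_mem_zpowers hx).trans hG
  obtain rfl := Subgroup.eq_zpowers_pow_of_card hx hxN hn hH
  set ω := χ ⟨x ^ n, Subgroup.mem_zpowers _⟩
  have hω : orderOf ω = d :=
    hχ ▸ (χ.orderOf_eq_orderOf_apply_gen (Subgroup.mem_zpowers_mk_self _)).symm
  have hres (ψ : G →* ℂˣ) : ψ.comp (Subgroup.zpowers (x ^ n)).subtype = χ ↔ ψ x ^ n = ω := by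
    rw [MonoidHom.comp_subtype_zpowers_eq_iff, map_pow]
  refine ⟨fun ψ hψ => ?_, fun n₁ hn₁ => ?_⟩
  · rw [ψ.orderOf_eq_orderOf_apply_gen hx]
    exact exists_orderOf_eq_of_pow_eq hd hn.ne' ((hres ψ).mp hψ) hω
  · set m := d * gcdPow n d * n₁
    have hmN : m ∣ d * n := by
      simpa only [m, mul_assoc] using mul_dvd_mul_left d (gcdPow_mul_dvd hn₁)
    have hm : m ≠ 0 := fun h => (Nat.mul_pos hd hn).ne' (Nat.eq_zero_of_zero_dvd (h ▸ hmN))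
    have : NeZero d := ⟨hd.ne'⟩
    rw [Nat.card_congr (Equiv.subtypeEquivRight fun ψ => by
        rw [hres, ψ.orderOf_eq_orderOf_apply_gen hx]),
      MonoidHom.card_subtype_apply_gen hx (fun ζ => ζ ^ n = ω ∧ orderOf ζ = m)
        fun ζ hζ => hxN ▸ orderOf_dvd_iff_pow_eq_one.mp (hζ.2 ▸ hmN)]
    exact card_pow_eq_and_orderOf_eq_gcdPow hn.ne' hn₁ hω
      ((Complex.isPrimitiveRoot_exp m hm).isUnit_unit hm)
end

section
/- Let d ≥ t be positive integers. Let A_{d,t} = {q prime : v_q(d) = v_q(t) > 0}, let d_A be the maximal divisor of d not divisible by any prime of A_{d,t}, and t_A the maximal divisor of t not divisible by any prime of A_{d,t}. Suppose lcm(d_A, t_A) is either 1, a prime power, or twice an odd prime power. Then: (i) if lcm(d_A, t_A) = 1, then d = t; (ii) if lcm(d_A, t_A) = q^a for a prime q and a > 0, then d = q^{a−x}·t where x = v_q(t) < a; (iii) if lcm(d_A, t_A) = 2q^a for an odd prime q and a > 0, then exactly one of d and t is even, and d = 2q^{a−x}·t if d is even while d = q^{a−x}·(t/2) if t is even, for some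 x < a. -/
set_option synthInstance.maxHeartbeats 1000000
set_option maxHeartbeats 1000000

/-- `awayPart d t m` is the maximal divisor of `m` not divisible by any prime of
`A_{d,t} = {q prime : v_q d = v_q t > 0}`.  Taking `m = d` gives `d_A` and `m = t`
gives `t_A`. -/
def awayPart (d t m : ℕ) : ℕ :=
  ∏ q ∈ m.primeFactors.filter
      (fun q => ¬ (d.factorization q = t.factorization q ∧ 0 < t.factorization q)),
    q ^ m.factorization q

open Nat Finsupp

lemma awayPart_pos (d t m : ℕ) : 0 < awayPart d t m := by
  apply Finset.prod_pos
  intro q hq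
  simp only [Finset.mem_filter, Nat.mem_primeFactors] at hq
  exact pow_pos hq.1.1.pos _

lemma awayPart_factorization (d t m : ℕ) (p : ℕ) :
    (awayPart d t m).factorization p =
      if ¬ (d.factorization p = t.factorization p ∧ 0 < t.factorization p) then
        m.factorization p else 0 := by
  unfold awayPart
  rw [Nat.factorization_prod]
  · rw [Finsupp.finset_sum_apply]
    have : ∀ q ∈ m.primeFactors.filter
        (fun q => ¬ (d.factorization q = t.factorization q ∧ 0 < t.factorization q)),
        (q ^ m.factorization q).factorization p
          = if q = p then m.factorization q else 0 := by
      intro q hq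
      simp only [Finset.mem_filter, Nat.mem_primeFactors] at hq
      rw [Nat.Prime.factorization_pow hq.1.1, Finsupp.single_apply]
    rw [Finset.sum_congr rfl this, Finset.sum_ite_eq']
    by_cases hmem : p ∈ m.primeFactors.filter
        (fun q => ¬ (d.factorization q = t.factorization q ∧ 0 < t.factorization q))
    · simp only [hmem, if_true]
      simp only [Finset.mem_filter] at hmem
      rw [if_pos hmem.2]
    · simp only [hmem, if_false]
      simp only [Finset.mem_filter, Nat.mem_primeFactors, not_and_or] at hmem
      by_cases hA : ¬ (d.factorization p = t.factorization p ∧ 0 < t.factorization p)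
      · rw [if_pos hA]
        rcases hmem with h | h
        · symm
          rcases h with h | h | h
          · exact Nat.factorization_eq_zero_of_not_prime m h
          · exact Nat.factorization_eq_zero_of_not_dvd h
          · simp [not_not.mp h]
        · exact (h (by tauto)).elim
      · rw [if_neg hA]
  · intro q hq
    simp only [Finset.mem_filter, Nat.mem_primeFactors] at hq
    exact pow_ne_zero _ hq.1.1.pos.ne'

lemma core (d t : ℕ) (hd : d ≠ 0) (ht : t ≠ 0) (p : ℕ) :
    (Nat.lcm (awayPart d t d) (awayPart d t t)).factorization p =
      if d.factorization p = t.factorization p ∧ 0 < t.factorization p then 0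
      else max (d.factorization p) (t.factorization p) := by
  rw [Nat.factorization_lcm (awayPart_pos d t d).ne' (awayPart_pos d t t).ne']
  rw [Finsupp.sup_apply]
  rw [awayPart_factorization d t d p, awayPart_factorization d t t p]
  by_cases hA : d.factorization p = t.factorization p ∧ 0 < t.factorization p
  · simp [hA]
  · simp [hA]

lemma mulA (d t q : ℕ) (hd : d ≠ 0) (ht : t ≠ 0) (hq : q.Prime)
    (h : ∀ p, p.Prime → p ≠ q → d.factorization p = t.factorization p) :
    q ^ t.factorization q * d = q ^ d.factorization q * t := by
  have hq0 : q ^ t.factorization q ≠ 0 := pow_ne_zero _ hq.pos.ne'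
  have hq1 : q ^ d.factorization q ≠ 0 := pow_ne_zero _ hq.pos.ne'
  apply Nat.eq_of_factorization_eq (Nat.mul_ne_zero hq0 hd) (Nat.mul_ne_zero hq1 ht)
  intro p
  rw [Nat.factorization_mul hq0 hd, Nat.factorization_mul hq1 ht]
  simp only [Nat.Prime.factorization_pow hq, Finsupp.add_apply, Finsupp.single_apply]
  by_cases hpq : q = p
  · subst hpq; rw [if_pos rfl, if_pos rfl]; omega
  · rw [if_neg hpq, if_neg hpq]
    by_cases hp : p.Prime
    · rw [h p hp (fun hc => hpq hc.symm)]
    · rw [Nat.factorization_eq_zero_of_not_prime d hp,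
        Nat.factorization_eq_zero_of_not_prime t hp]

lemma mulB (d t q : ℕ) (hd : d ≠ 0) (ht : t ≠ 0) (hq : q.Prime) (hq2 : q ≠ 2)
    (h : ∀ p, p.Prime → p ≠ 2 → p ≠ q → d.factorization p = t.factorization p) :
    2 ^ t.factorization 2 * q ^ t.factorization q * d
      = 2 ^ d.factorization 2 * q ^ d.factorization q * t := by
  have h2t : (2:ℕ) ^ t.factorization 2 ≠ 0 := pow_ne_zero _ two_ne_zero
  have h2d : (2:ℕ) ^ d.factorization 2 ≠ 0 := pow_ne_zero _ two_ne_zero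
  have hqt : q ^ t.factorization q ≠ 0 := pow_ne_zero _ hq.pos.ne'
  have hqd : q ^ d.factorization q ≠ 0 := pow_ne_zero _ hq.pos.ne'
  apply Nat.eq_of_factorization_eq
    (Nat.mul_ne_zero (Nat.mul_ne_zero h2t hqt) hd)
    (Nat.mul_ne_zero (Nat.mul_ne_zero h2d hqd) ht)
  intro p
  rw [Nat.factorization_mul (Nat.mul_ne_zero h2t hqt) hd,
    Nat.factorization_mul (Nat.mul_ne_zero h2d hqd) ht,
    Nat.factorization_mul h2t hqt, Nat.factorization_mul h2d hqd]
  simp only [Nat.Prime.factorization_pow hq, Nat.Prime.factorization_pow Nat.prime_two,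
    Finsupp.add_apply, Finsupp.single_apply]
  by_cases hp2 : 2 = p
  · subst hp2
    rw [if_pos rfl, if_pos rfl, if_neg (fun hc : q = 2 => hq2 hc),
      if_neg (fun hc : q = 2 => hq2 hc)]
    omega
  · rw [if_neg hp2, if_neg hp2]
    by_cases hpq : q = p
    · subst hpq; rw [if_pos rfl, if_pos rfl]; omega
    · rw [if_neg hpq, if_neg hpq]
      by_cases hp : p.Prime
      · rw [h p hp (fun hc => hp2 hc.symm) (fun hc => hpq hc.symm)]
      · rw [Nat.factorization_eq_zero_of_not_prime d hp,
          Nat.factorization_eq_zero_of_not_prime t hp]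

lemma eq_away (d t : ℕ) (hd : d ≠ 0) (ht : t ≠ 0) (p : ℕ)
    (h0 : (Nat.lcm (awayPart d t d) (awayPart d t t)).factorization p = 0) :
    d.factorization p = t.factorization p := by
  rw [core d t hd ht p] at h0
  by_cases hA : d.factorization p = t.factorization p ∧ 0 < t.factorization p
  · exact hA.1
  · rw [if_neg hA] at h0; omega

/-- Let `d ≥ t` be positive integers such that `lcm (d_A, t_A)` is
either `1`, a prime power, or twice an odd prime power.  Then:
(i) if `lcm (d_A, t_A) = 1` then `d = t`;
(ii) if `lcm (d_A, t_A) = q ^ a` for a prime `q` and `a > 0`, then `d = q ^ (a - x) * t`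
where `x = v_q t < a`;
(iii) if `lcm (d_A, t_A) = 2 * q ^ a` for an odd prime `q` and `a > 0`, then exactly one
of `d, t` is even, and `d = 2 * q ^ (a - x) * t` if `d` is even while
`d = q ^ (a - x) * (t / 2)` if `t` is even, for some `x < a`. -/
theorem statement17 (d t : ℕ) (ht : 0 < t) (hdt : t ≤ d) :
    (Nat.lcm (awayPart d t d) (awayPart d t t) = 1 → d = t) ∧
      (∀ q a : ℕ, q.Prime → 0 < a → Nat.lcm (awayPart d t d) (awayPart d t t) = q ^ a →
        t.factorization q < a ∧ d = q ^ (a - t.factorization q) * t) ∧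
      (∀ q a : ℕ, q.Prime → Odd q → 0 < a →
        Nat.lcm (awayPart d t d) (awayPart d t t) = 2 * q ^ a →
        ((Even d ↔ ¬ Even t) ∧
          (Even d → ∃ x : ℕ, x < a ∧ d = 2 * q ^ (a - x) * t) ∧
          (Even t → ∃ x : ℕ, x < a ∧ d = q ^ (a - x) * (t / 2)))) := by
  have hd0 : d ≠ 0 := by omega
  have ht0 : t ≠ 0 := by omega
  refine ⟨?_, ?_, ?_⟩
  · -- part (i)
    intro h1
    apply Nat.eq_of_factorization_eq hd0 ht0
    intro p
    exact eq_away d t hd0 ht0 p (by rw [h1, Nat.factorization_one]; rfl)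
  · -- part (ii)
    intro q a hqp ha hL
    have hother : ∀ p, p.Prime → p ≠ q → d.factorization p = t.factorization p := by
      intro p hp hpq
      apply eq_away d t hd0 ht0 p
      rw [hL, Nat.Prime.factorization_pow hqp, Finsupp.single_apply,
        if_neg (fun hc => hpq hc.symm)]
    have hq' : (Nat.lcm (awayPart d t d) (awayPart d t t)).factorization q = a := by
      rw [hL, Nat.Prime.factorization_pow hqp, Finsupp.single_apply, if_pos rfl]
    rw [core d t hd0 ht0 q] at hq'
    set x := t.factorization q with hxdef
    set y := d.factorization q with hydef
    have hA : ¬ (y = x ∧ 0 < x) := by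
      intro hc; rw [if_pos hc] at hq'; omega
    rw [if_neg hA] at hq'
    have hmul := mulA d t q hd0 ht0 hqp hother
    have hxy : x < y := by
      rcases lt_trichotomy x y with h | h | h
      · exact h
      · omega
      · exfalso
        have h1 : q ^ y * (q ^ (x - y) * d) = q ^ y * t := by
          rw [← mul_assoc, ← pow_add, show y + (x - y) = x by omega]; exact hmul
        have h2 : q ^ (x - y) * d = t := Nat.eq_of_mul_eq_mul_left (pow_pos hqp.pos y) h1
        have h3 : 2 * d ≤ q ^ (x - y) * d :=
          Nat.mul_le_mul (le_trans hqp.two_le (Nat.le_self_pow (by omega) q)) le_rfl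
        omega
    have hya : y = a := by omega
    refine ⟨by omega, ?_⟩
    have hfin : q ^ x * d = q ^ x * (q ^ (a - x) * t) := by
      calc q ^ x * d = q ^ y * t := hmul
        _ = q ^ x * (q ^ (a - x) * t) := by
            rw [← mul_assoc, ← pow_add, show x + (a - x) = y by omega]
    exact Nat.eq_of_mul_eq_mul_left (pow_pos hqp.pos x) hfin
  · -- part (iii)
    intro q a hqp hodd ha hL
    have hq2 : q ≠ 2 := by rintro rfl; simp [Nat.odd_iff] at hodd
    have hq3 : 3 ≤ q := by have := hqp.two_le; omega
    have hfact : ∀ p, (2 * q ^ a).factorization p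
        = (if 2 = p then 1 else 0) + (if q = p then a else 0) := by
      intro p
      rw [Nat.factorization_mul two_ne_zero (pow_ne_zero _ hqp.pos.ne'),
        Nat.Prime.factorization_pow hqp, Nat.Prime.factorization Nat.prime_two,
        Finsupp.add_apply, Finsupp.single_apply, Finsupp.single_apply]
    have hother : ∀ p, p.Prime → p ≠ 2 → p ≠ q → d.factorization p = t.factorization p := by
      intro p hp hp2 hpq
      apply eq_away d t hd0 ht0 p
      rw [hL, hfact p, if_neg (fun hc => hp2 hc.symm), if_neg (fun hc => hpq hc.symm)]
    have hmul := mulB d t q hd0 ht0 hqp hq2 hother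
    have hv2 : (Nat.lcm (awayPart d t d) (awayPart d t t)).factorization 2 = 1 := by
      rw [hL, hfact 2, if_pos rfl, if_neg (fun hc : q = 2 => hq2 hc)]
    have hvq : (Nat.lcm (awayPart d t d) (awayPart d t t)).factorization q = a := by
      rw [hL, hfact q, if_neg (fun hc : (2:ℕ) = q => hq2 hc.symm), if_pos rfl]
      omega
    rw [core d t hd0 ht0 2] at hv2
    rw [core d t hd0 ht0 q] at hvq
    set u := d.factorization 2 with hudef
    set v := t.factorization 2 with hvdef
    set y := d.factorization q with hydef
    set x := t.factorization q with hxdef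
    have hA2 : ¬ (u = v ∧ 0 < v) := by intro hc; rw [if_pos hc] at hv2; omega
    rw [if_neg hA2] at hv2
    have hAq : ¬ (y = x ∧ 0 < x) := by intro hc; rw [if_pos hc] at hvq; omega
    rw [if_neg hAq] at hvq
    have huv : (u = 1 ∧ v = 0) ∨ (u = 0 ∧ v = 1) := by omega
    have hEd : Even d ↔ 0 < u := by
      rw [even_iff_two_dvd, ← pow_one 2,
        Nat.Prime.pow_dvd_iff_le_factorization Nat.prime_two hd0]
      omega
    have hEt : Even t ↔ 0 < v := by
      rw [even_iff_two_dvd, ← pow_one 2,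
        Nat.Prime.pow_dvd_iff_le_factorization Nat.prime_two ht0]
      omega
    refine ⟨by rw [hEd, hEt]; omega, ?_, ?_⟩
    · -- d even
      intro hed
      have hu : u = 1 ∧ v = 0 := by rw [hEd] at hed; omega
      rw [hu.1, hu.2, pow_zero, pow_one, one_mul] at hmul
      -- hmul : q ^ x * d = 2 * q ^ y * t
      have hxy : x < y := by
        rcases lt_trichotomy x y with h | h | h
        · exact h
        · omega
        · exfalso
          have h1 : q ^ y * (q ^ (x - y) * d) = q ^ y * (2 * t) := by
            rw [← mul_assoc, ← pow_add, show y + (x - y) = x by omega, hmul]; ring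
          have h2 : q ^ (x - y) * d = 2 * t := Nat.eq_of_mul_eq_mul_left (pow_pos hqp.pos y) h1
          have h3 : 3 * d ≤ q ^ (x - y) * d :=
            Nat.mul_le_mul (le_trans hq3 (Nat.le_self_pow (by omega) q)) le_rfl
          omega
      have hya : y = a := by omega
      refine ⟨x, by omega, ?_⟩
      have hfin : q ^ x * d = q ^ x * (2 * q ^ (a - x) * t) := by
        calc q ^ x * d = 2 * q ^ y * t := hmul
          _ = q ^ x * (2 * q ^ (a - x) * t) := by
              rw [show y = x + (a - x) by omega, pow_add]; ring
      exact Nat.eq_of_mul_eq_mul_left (pow_pos hqp.pos x) hfin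
    · -- t even
      intro het
      have hu : u = 0 ∧ v = 1 := by rw [hEt] at het; omega
      rw [hu.1, hu.2, pow_zero, pow_one, one_mul] at hmul
      -- hmul : 2 * q ^ x * d = q ^ y * t
      have htdiv : 2 * (t / 2) = t :=
        Nat.mul_div_cancel' (even_iff_two_dvd.mp het)
      have hmul' : q ^ x * d = q ^ y * (t / 2) := by
        have h1 : 2 * (q ^ x * d) = 2 * (q ^ y * (t / 2)) := by
          calc 2 * (q ^ x * d) = 2 * q ^ x * d := by ring
            _ = q ^ y * t := hmul
            _ = q ^ y * (2 * (t / 2)) := by rw [htdiv]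
            _ = 2 * (q ^ y * (t / 2)) := by ring
        exact Nat.eq_of_mul_eq_mul_left two_pos h1
      have hxy : x < y := by
        rcases lt_trichotomy x y with h | h | h
        · exact h
        · omega
        · exfalso
          have h1 : q ^ y * (q ^ (x - y) * d) = q ^ y * (t / 2) := by
            rw [← mul_assoc, ← pow_add, show y + (x - y) = x by omega, hmul']
          have h2 : q ^ (x - y) * d = t / 2 := Nat.eq_of_mul_eq_mul_left (pow_pos hqp.pos y) h1
          have h3 : 3 * d ≤ q ^ (x - y) * d :=
            Nat.mul_le_mul (le_trans hq3 (Nat.le_self_pow (by omega) q)) le_rfl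
          omega
      have hya : y = a := by omega
      refine ⟨x, by omega, ?_⟩
      have hfin : q ^ x * d = q ^ x * (q ^ (a - x) * (t / 2)) := by
        calc q ^ x * d = q ^ y * (t / 2) := hmul'
          _ = q ^ x * (q ^ (a - x) * (t / 2)) := by
              rw [show y = x + (a - x) by omega, pow_add]; ring
      exact Nat.eq_of_mul_eq_mul_left (pow_pos hqp.pos x) hfin
end

section
/- Let p ≠ 2 and let E/K : y² = f(x) be an elliptic curve with f ∈ K[x] a monic squarefree cubic with roots r₁, r₂, r₃ ∈ K̄. Then: (i) whether the roots are equidistant, i.e. v(r₁ − r₂) = v(r₁ − r₃) = v(r₂ − r₃), does not depend on the choice of model of E of the form y₁² = f₁(x₁) with f₁ a monic cubic (any two such models are related by x₁ = u²x + s, y₁ = u³y with u ∈ K^×, s ∈ K); and (ii) E has potentially good reduction if and only if the roots of f are equidistant. -/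
/-!
Write `x = u² x' + r`, `y = u³ y' + s u² x' + t`; this turns `y² = (x - r₁)(x - r₂)(x - r₃)` into
`(y' + σ x' + τ)² = (x' - ρ₁)(x' - ρ₂)(x' - ρ₃)` with `ρᵢ = (rᵢ - r) / u²`, `σ = s / u`,
`τ = t / u³`. Since `v 2 = 0`, integrality of this model makes the `ρᵢ` roots of a monic cubic over
the valuation ring, hence integral; its discriminant `16 ∏ (ρᵢ - ρⱼ)²` is then a unit only if every
`v (ρᵢ - ρⱼ)` vanishes, i.e. `v (rᵢ - rⱼ) = 2 v u` for all pairs. Conversely, for equidistant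
roots take `u² = r₁ - r₂` and `r = r₁`: the `ρᵢ` are integral with unit differences.

That `v 2 = 0` comes from `p ≠ 2`: `2 ^ (p - 1) ≡ 1 mod p` is an `n`-th power in `ℚ_p` for every
`n` prime to `p` (Hensel), so its valuation, an integer, is divisible by arbitrarily large `n`.
-/

open Polynomial

def Equid {Ω : Type} [Field Ω] (v : Ω → ℚ) (a b c : Ω) : Prop :=
  v (a - b) = v (a - c) ∧ v (a - c) = v (b - c)

namespace PadicInt

variable {p : ℕ} [Fact p.Prime]

/-- Hensel's lemma at the approximate root `1` of `X ^ n - a`. -/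
theorem exists_pow_eq_of_norm_sub_one_lt {a : ℤ_[p]} (ha : ‖a - 1‖ < 1) {n : ℕ}
    (hn : ¬p ∣ n) : ∃ z : ℤ_[p], z ^ n = a := by
  have hderiv : ‖(X ^ n - C a : ℤ_[p][X]).derivative.aeval (1 : ℤ_[p])‖ = 1 := by
    simpa [derivative_X_pow] using
      (norm_natCast_eq_one_iff (p := p)).2 ((Nat.Prime.coprime_iff_not_dvd Fact.out).2 hn)
  have heval : ‖(X ^ n - C a : ℤ_[p][X]).aeval (1 : ℤ_[p])‖ < 1 := by
    simpa [norm_sub_rev] using ha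
  obtain ⟨z, hz, -⟩ := hensels_lemma (F := X ^ n - C a) (a := 1) (by rwa [hderiv, one_pow])
  exact ⟨z, sub_eq_zero.1 (by simpa using hz)⟩

theorem norm_pow_sub_one_sub_one_lt {a : ℤ} (ha : ¬(p : ℤ) ∣ a) :
    ‖(a : ℤ_[p]) ^ (p - 1) - 1‖ < 1 := by
  have hp := Nat.prime_iff_prime_int.mp (Fact.out : p.Prime)
  have hdvd := (Int.ModEq.pow_card_sub_one_eq_one Fact.out
    (hp.coprime_iff_not_dvd.2 ha).symm).symm.dvd
  simpa using (norm_int_lt_one_iff_dvd (p := p) _).2 hdvd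

end PadicInt

theorem Polynomial.pairwise_ne_of_squarefree {F : Type*} [Field F] {a b c : F}
    (h : Squarefree ((X - C a) * ((X - C b) * (X - C c)))) : a ≠ b ∧ a ≠ c ∧ b ≠ c := by
  refine ⟨?_, ?_, ?_⟩ <;> rintro rfl
  · exact not_isUnit_X_sub_C a (h _ ⟨X - C c, by ring⟩)
  · exact not_isUnit_X_sub_C a (h _ ⟨X - C b, by ring⟩)
  · exact not_isUnit_X_sub_C b (h _ ⟨X - C a, by ring⟩)

theorem sub_div_sq_ne_sub_div_sq {F : Type*} [Field F] {u : F} (hu : u ≠ 0) (r : F) {a b : F}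
    (hab : a ≠ b) : (a - r) / u ^ 2 ≠ (b - r) / u ^ 2 := fun h =>
  hab (by simpa [sub_left_inj, div_left_inj' (pow_ne_zero 2 hu)] using h)

/-- `v` is a valuation on `Fˣ`; its value at `0` is arbitrary. -/
structure IsValuationOnNonzero {F : Type*} [Field F] (v : F → ℚ) : Prop where
  map_mul : ∀ x y : F, x ≠ 0 → y ≠ 0 → v (x * y) = v x + v y
  map_add : ∀ x y : F, x ≠ 0 → y ≠ 0 → x + y ≠ 0 → min (v x) (v y) ≤ v (x + y)

namespace IsValuationOnNonzero

section Field

variable {F : Type*} [Field F] {v : F → ℚ}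

theorem map_one (hv : IsValuationOnNonzero v) : v 1 = 0 := by
  have := hv.map_mul 1 1 one_ne_zero one_ne_zero
  rw [mul_one] at this
  linarith

theorem map_neg (hv : IsValuationOnNonzero v) {x : F} (hx : x ≠ 0) : v (-x) = v x := by
  have h : v (-1) = 0 := by
    have := hv.map_mul (-1) (-1) (neg_ne_zero.2 one_ne_zero) (neg_ne_zero.2 one_ne_zero)
    rw [neg_mul_neg, one_mul, hv.map_one] at this
    linarith
  rw [neg_eq_neg_one_mul, hv.map_mul _ _ (neg_ne_zero.2 one_ne_zero) hx, h, zero_add]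

theorem map_pow (hv : IsValuationOnNonzero v) {x : F} (hx : x ≠ 0) (n : ℕ) :
    v (x ^ n) = n * v x := by
  induction n with
  | zero => simp [hv.map_one]
  | succ n ih =>
    rw [pow_succ, hv.map_mul _ _ (pow_ne_zero n hx) hx, ih]
    push_cast
    ring

theorem map_inv (hv : IsValuationOnNonzero v) {x : F} (hx : x ≠ 0) : v x⁻¹ = -v x := by
  have := hv.map_mul x x⁻¹ hx (inv_ne_zero hx)
  rw [mul_inv_cancel₀ hx, hv.map_one] at this
  linarith

theorem map_sub_eq_of_div (hv : IsValuationOnNonzero v) {u : F} (hu : u ≠ 0) (r : F)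
    {a b : F} (hab : a ≠ b) :
    v (a - b) = 2 * v u + v ((a - r) / u ^ 2 - (b - r) / u ^ 2) := by
  rw [show (a - r) / u ^ 2 - (b - r) / u ^ 2 = (a - b) * (u ^ 2)⁻¹ by ring,
    hv.map_mul _ _ (sub_ne_zero.2 hab) (inv_ne_zero (pow_ne_zero 2 hu)),
    hv.map_inv (pow_ne_zero 2 hu), hv.map_pow hu]
  push_cast
  ring

theorem exists_map_pow_gt (hv : IsValuationOnNonzero v) {π : F} (hπ : π ≠ 0) (hvπ : 0 < v π)
    (B : ℚ) : ∃ N : ℕ, B < v (π ^ N) := by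
  obtain ⟨N, hN⟩ := exists_nat_gt (B / v π)
  exact ⟨N, by rw [hv.map_pow hπ]; exact (div_lt_iff₀ hvπ).1 hN⟩

theorem add_ne_zero_of_lt (hv : IsValuationOnNonzero v) {x y : F} (hy : y ≠ 0)
    (hxy : x ≠ 0 → v x < v y) : x + y ≠ 0 := by
  intro h
  have hx : x = -y := eq_neg_of_add_eq_zero_left h
  have := hxy (hx ▸ neg_ne_zero.2 hy)
  rw [hx, hv.map_neg hy] at this
  exact lt_irrefl _ this

def integers (hv : IsValuationOnNonzero v) : Subring F where
  carrier := {x | x ≠ 0 → 0 ≤ v x}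
  zero_mem' h := absurd rfl h
  one_mem' _ := hv.map_one.ge
  add_mem' {x y} hx hy hxy := by
    rcases eq_or_ne x 0 with rfl | hx0
    · simpa using hy (by simpa using hxy)
    rcases eq_or_ne y 0 with rfl | hy0
    · simpa using hx (by simpa using hxy)
    exact le_trans (le_min (hx hx0) (hy hy0)) (hv.map_add x y hx0 hy0 hxy)
  mul_mem' {x y} hx hy hxy := by
    rw [hv.map_mul x y (left_ne_zero_of_mul hxy) (right_ne_zero_of_mul hxy)]
    exact add_nonneg (hx (left_ne_zero_of_mul hxy)) (hy (right_ne_zero_of_mul hxy))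
  neg_mem' {x} hx hnx := by
    rw [hv.map_neg (neg_ne_zero.1 hnx)]
    exact hx (neg_ne_zero.1 hnx)

theorem mem_integers (hv : IsValuationOnNonzero v) {x : F} :
    x ∈ hv.integers ↔ (x ≠ 0 → 0 ≤ v x) := Iff.rfl

theorem inv_mem_integers (hv : IsValuationOnNonzero v) {x : F} (hx : x ∉ hv.integers) :
    x⁻¹ ∈ hv.integers := by
  rw [mem_integers] at hx ⊢
  push Not at hx
  intro _
  rw [hv.map_inv hx.1]
  linarith [hx.2]

theorem mem_integers_of_cubic (hv : IsValuationOnNonzero v) {a b c x : F}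
    (ha : a ∈ hv.integers) (hb : b ∈ hv.integers) (hc : c ∈ hv.integers)
    (hx : x ^ 3 + a * x ^ 2 + b * x + c = 0) : x ∈ hv.integers := by
  by_contra hxO
  have hx0 : x ≠ 0 := fun h => hxO (h ▸ zero_mem _)
  have hxinv := hv.inv_mem_integers hxO
  have hx_eq : x = -a - b * x⁻¹ - c * x⁻¹ ^ 2 := by
    field_simp
    linear_combination hx
  exact hxO (hx_eq ▸ sub_mem (sub_mem (neg_mem ha) (mul_mem hb hxinv))
    (mul_mem hc (pow_mem hxinv 2)))

/-- The content is `x - y ≠ 0`: otherwise `0 ≤ v (x - y)` would only concern the junk `v 0`. -/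
theorem map_sub_nonneg_of_lt (hv : IsValuationOnNonzero v) {x y : F} (hx : x ∈ hv.integers)
    (hy : y ∈ hv.integers) (hy0 : y ≠ 0) (hxy : x ≠ 0 → v x < v y) : 0 ≤ v (x - y) := by
  rw [sub_eq_add_neg]
  refine add_mem hx (neg_mem hy) (hv.add_ne_zero_of_lt (neg_ne_zero.2 hy0) ?_)
  rw [hv.map_neg hy0]
  exact hxy

end Field

section Algebra

variable {K Ω : Type*} [Field K] [Field Ω] [Algebra K Ω] {v : Ω → ℚ}

/-- `v a` is an integer divisible by arbitrarily large integers. -/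
theorem map_algebraMap_eq_zero_of_exists_pow (hv : IsValuationOnNonzero v)
    (hv_int : ∀ x : K, x ≠ 0 → ∃ n : ℤ, v (algebraMap K Ω x) = n) {a : K} (ha : a ≠ 0)
    (hpow : ∀ N : ℕ, ∃ n > N, ∃ y : K, y ^ n = a) : v (algebraMap K Ω a) = 0 := by
  obtain ⟨m, hm⟩ := hv_int a ha
  obtain ⟨n, hn, y, rfl⟩ := hpow m.natAbs
  have hy : y ≠ 0 := fun h => ha (by simp [h, (Nat.zero_lt_of_lt hn).ne'])
  obtain ⟨k, hk⟩ := hv_int y hy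
  rw [_root_.map_pow, hv.map_pow ((_root_.map_ne_zero _).2 hy), hk] at hm ⊢
  have hdvd : (n : ℤ) ∣ m := ⟨k, by exact_mod_cast hm.symm⟩
  rw [Int.eq_zero_of_dvd_of_natAbs_lt_natAbs hdvd (by simpa using hn)] at hm
  exact_mod_cast hm

theorem map_two_eq_zero {p : ℕ} [Fact p.Prime] (hp2 : p ≠ 2) [Algebra ℚ_[p] K]
    (hv : IsValuationOnNonzero v)
    (hv_int : ∀ x : K, x ≠ 0 → ∃ n : ℤ, v (algebraMap K Ω x) = n) : v 2 = 0 := by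
  have hp : p.Prime := Fact.out
  have : CharZero K := charZero_of_injective_algebraMap (algebraMap ℚ_[p] K).injective
  have : CharZero Ω := charZero_of_injective_algebraMap (algebraMap K Ω).injective
  have h2p : ¬(p : ℤ) ∣ 2 := fun h =>
    hp2 ((Nat.prime_dvd_prime_iff_eq hp Nat.prime_two).1 (by exact_mod_cast h))
  have hpow : ∀ N : ℕ, ∃ n > N, ∃ y : K, y ^ n = 2 ^ (p - 1) := fun N => by
    have hn : ¬p ∣ p * N + 1 := fun h =>
      hp.one_lt.ne' (Nat.dvd_one.1 ((Nat.dvd_add_right (dvd_mul_right p N)).1 h))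
    obtain ⟨z, hz⟩ := PadicInt.exists_pow_eq_of_norm_sub_one_lt
      (PadicInt.norm_pow_sub_one_sub_one_lt h2p) hn
    refine ⟨p * N + 1, by nlinarith [hp.one_lt], algebraMap ℚ_[p] K z, ?_⟩
    have hz' := congrArg ((↑) : ℤ_[p] → ℚ_[p]) hz
    rw [PadicInt.coe_pow, PadicInt.coe_pow, PadicInt.coe_intCast, Int.cast_ofNat] at hz'
    rw [← _root_.map_pow, hz', _root_.map_pow, map_ofNat]
  have h := hv.map_algebraMap_eq_zero_of_exists_pow hv_int (pow_ne_zero _ two_ne_zero) hpow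
  rw [_root_.map_pow, map_ofNat, hv.map_pow two_ne_zero, mul_eq_zero] at h
  exact h.resolve_left (by have := hp.two_le; norm_cast; omega)

end Algebra

end IsValuationOnNonzero

theorem equid_mul_add_iff {F : Type} [Field F] {v : F → ℚ} (hv : IsValuationOnNonzero v)
    {a b c : F} (hab : a ≠ b) (hac : a ≠ c) (hbc : b ≠ c) {t : F} (ht : t ≠ 0) (s : F) :
    Equid v a b c ↔ Equid v (t * a + s) (t * b + s) (t * c + s) := by
  have key : ∀ {x y : F}, x ≠ y → v (t * x + s - (t * y + s)) = v t + v (x - y) :=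
    fun {x y} hxy => by
      rw [show t * x + s - (t * y + s) = t * (x - y) by ring,
        hv.map_mul _ _ ht (sub_ne_zero.2 hxy)]
  simp only [Equid, key hab, key hac, key hbc, add_right_inj]

namespace WeierstrassCurve

section CommRing

variable {R : Type*} [CommRing R]

/-- The model `(y + σ x + τ)² = (x - ρ₁)(x - ρ₂)(x - ρ₃)`. -/
def factored (ρ₁ ρ₂ ρ₃ σ τ : R) : WeierstrassCurve R :=
  ⟨2 * σ, -(ρ₁ + ρ₂ + ρ₃) - σ ^ 2, 2 * τ, ρ₁ * ρ₂ + ρ₁ * ρ₃ + ρ₂ * ρ₃ - 2 * σ * τ,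
    -(ρ₁ * ρ₂ * ρ₃) - τ ^ 2⟩

theorem factored_Δ (ρ₁ ρ₂ ρ₃ σ τ : R) :
    (factored ρ₁ ρ₂ ρ₃ σ τ).Δ = 16 * ((ρ₁ - ρ₂) * (ρ₁ - ρ₃) * (ρ₂ - ρ₃)) ^ 2 := by
  simp only [factored, Δ, b₂, b₄, b₆, b₈]
  ring

end CommRing

theorem variableChange_factored {F : Type*} [Field F] (C : VariableChange F) (ρ₁ ρ₂ ρ₃ : F) :
    C • factored ρ₁ ρ₂ ρ₃ 0 0 =
      factored ((ρ₁ - C.r) / (C.u : F) ^ 2) ((ρ₂ - C.r) / (C.u : F) ^ 2)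
        ((ρ₃ - C.r) / (C.u : F) ^ 2) (C.s / C.u) (C.t / (C.u : F) ^ 3) := by
  have hu : (C.u : F) ≠ 0 := C.u.ne_zero
  ext <;> simp only [variableChange_a₁, variableChange_a₂, variableChange_a₃, variableChange_a₄,
    variableChange_a₆, factored, Units.val_inv_eq_inv_val] <;> field_simp <;> ring

theorem baseChange_eq_factored {K Ω : Type*} [Field K] [Field Ω] [Algebra K Ω] {f : K[X]}
    {r₁ r₂ r₃ : Ω} (hf : f.map (algebraMap K Ω) = (X - C r₁) * ((X - C r₂) * (X - C r₃))) :
    (⟨0, f.coeff 2, 0, f.coeff 1, f.coeff 0⟩ : WeierstrassCurve K).baseChange Ω =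
      factored r₁ r₂ r₃ 0 0 := by
  have hcoeff : ∀ k, algebraMap K Ω (f.coeff k) = (X ^ 3 + C (-(r₁ + r₂ + r₃)) * X ^ 2 +
      C (r₁ * r₂ + r₁ * r₃ + r₂ * r₃) * X + C (-(r₁ * r₂ * r₃)) : Polynomial Ω).coeff k :=
    fun k => by
      rw [← coeff_map, hf]
      congr 1
      simp only [map_neg, map_add, map_mul]
      ring
  ext <;> simp only [baseChange, map, factored, hcoeff, coeff_add, coeff_C_mul, coeff_X_pow,
    coeff_C, coeff_X, map_zero] <;> norm_num

section Valuation

variable {F : Type*} [Field F] {v : F → ℚ}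

/-- As `v 0` is arbitrary, a vanishing coefficient may violate this, so constructions keep every
coefficient nonzero. -/
def IsGoodReductionModel (v : F → ℚ) (W : WeierstrassCurve F) : Prop :=
  (0 ≤ v W.a₁ ∧ 0 ≤ v W.a₂ ∧ 0 ≤ v W.a₃ ∧ 0 ≤ v W.a₄ ∧ 0 ≤ v W.a₆) ∧ v W.Δ = 0

theorem val_factored_Δ (hv : IsValuationOnNonzero v) (h2 : (2 : F) ≠ 0) (hv2 : v 2 = 0)
    {ρ₁ ρ₂ ρ₃ : F} (h₁₂ : ρ₁ ≠ ρ₂) (h₁₃ : ρ₁ ≠ ρ₃) (h₂₃ : ρ₂ ≠ ρ₃) (σ τ : F) :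
    v (factored ρ₁ ρ₂ ρ₃ σ τ).Δ = 2 * (v (ρ₁ - ρ₂) + v (ρ₁ - ρ₃) + v (ρ₂ - ρ₃)) := by
  have hd : (ρ₁ - ρ₂) * (ρ₁ - ρ₃) * (ρ₂ - ρ₃) ≠ 0 := by
    simp [sub_eq_zero, h₁₂, h₁₃, h₂₃]
  have h16 : (16 : F) = 2 ^ 4 := by norm_num
  rw [factored_Δ, hv.map_mul _ _ (h16 ▸ pow_ne_zero 4 h2) (pow_ne_zero 2 hd), h16,
    hv.map_pow h2, hv.map_pow hd, hv.map_mul _ _ (left_ne_zero_of_mul hd) (right_ne_zero_of_mul hd),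
    hv.map_mul _ _ (sub_ne_zero.2 h₁₂) (sub_ne_zero.2 h₁₃), hv2]
  push_cast
  ring

theorem roots_mem_integers_of_isGoodReductionModel (hv : IsValuationOnNonzero v)
    (h2 : (2 : F) ≠ 0) (hv2 : v 2 = 0) {ρ₁ ρ₂ ρ₃ σ τ : F}
    (h : IsGoodReductionModel v (factored ρ₁ ρ₂ ρ₃ σ τ)) :
    ρ₁ ∈ hv.integers ∧ ρ₂ ∈ hv.integers ∧ ρ₃ ∈ hv.integers := by
  obtain ⟨⟨h₁, h₂, h₃, h₄, h₆⟩, -⟩ := h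
  have hinv2 : (2 : F)⁻¹ ∈ hv.integers := fun _ => by rw [hv.map_inv h2, hv2, neg_zero]
  have hσ : σ ∈ hv.integers := by
    convert mul_mem (show 2 * σ ∈ hv.integers from fun _ => h₁) hinv2 using 1
    field_simp
  have hτ : τ ∈ hv.integers := by
    convert mul_mem (show 2 * τ ∈ hv.integers from fun _ => h₃) hinv2 using 1
    field_simp
  have he₁ : -(ρ₁ + ρ₂ + ρ₃) ∈ hv.integers := by
    simpa using add_mem (show -(ρ₁ + ρ₂ + ρ₃) - σ ^ 2 ∈ hv.integers from fun _ => h₂)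
      (pow_mem hσ 2)
  have he₂ : ρ₁ * ρ₂ + ρ₁ * ρ₃ + ρ₂ * ρ₃ ∈ hv.integers := by
    simpa using add_mem (show ρ₁ * ρ₂ + ρ₁ * ρ₃ + ρ₂ * ρ₃ - 2 * σ * τ ∈ hv.integers
      from fun _ => h₄) (mul_mem (mul_mem (ofNat_mem _ 2) hσ) hτ)
  have he₃ : -(ρ₁ * ρ₂ * ρ₃) ∈ hv.integers := by
    simpa using add_mem (show -(ρ₁ * ρ₂ * ρ₃) - τ ^ 2 ∈ hv.integers from fun _ => h₆)
      (pow_mem hτ 2)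
  have hroot : ∀ x, (x - ρ₁) * (x - ρ₂) * (x - ρ₃) = 0 → x ∈ hv.integers := fun x hx =>
    hv.mem_integers_of_cubic he₁ he₂ he₃ (by linear_combination hx)
  exact ⟨hroot ρ₁ (by ring), hroot ρ₂ (by ring), hroot ρ₃ (by ring)⟩

theorem val_sub_eq_zero_of_isGoodReductionModel (hv : IsValuationOnNonzero v)
    (h2 : (2 : F) ≠ 0) (hv2 : v 2 = 0) {ρ₁ ρ₂ ρ₃ σ τ : F}
    (h₁₂ : ρ₁ ≠ ρ₂) (h₁₃ : ρ₁ ≠ ρ₃) (h₂₃ : ρ₂ ≠ ρ₃)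
    (h : IsGoodReductionModel v (factored ρ₁ ρ₂ ρ₃ σ τ)) :
    v (ρ₁ - ρ₂) = 0 ∧ v (ρ₁ - ρ₃) = 0 ∧ v (ρ₂ - ρ₃) = 0 := by
  obtain ⟨hρ₁, hρ₂, hρ₃⟩ := roots_mem_integers_of_isGoodReductionModel hv h2 hv2 h
  have hΔ := h.2
  rw [val_factored_Δ hv h2 hv2 h₁₂ h₁₃ h₂₃] at hΔ
  have d₁₂ := sub_mem hρ₁ hρ₂ (sub_ne_zero.2 h₁₂)
  have d₁₃ := sub_mem hρ₁ hρ₃ (sub_ne_zero.2 h₁₃)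
  have d₂₃ := sub_mem hρ₂ hρ₃ (sub_ne_zero.2 h₂₃)
  exact ⟨by linarith, by linarith, by linarith⟩

/-- With `σ = τ = 0` some coefficients may vanish; `σ = τ = π ^ N` with `N` large makes each of
them nonzero, dominated by its integral part or by the power of `π`. -/
theorem exists_isGoodReductionModel_factored (hv : IsValuationOnNonzero v) (h2 : (2 : F) ≠ 0)
    (hv2 : v 2 = 0) {ρ₁ ρ₂ ρ₃ : F} (hρ₁ : ρ₁ ∈ hv.integers) (hρ₂ : ρ₂ ∈ hv.integers)
    (hρ₃ : ρ₃ ∈ hv.integers) (h₁₂ : ρ₁ ≠ ρ₂) (h₁₃ : ρ₁ ≠ ρ₃) (h₂₃ : ρ₂ ≠ ρ₃)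
    (hv₁₂ : v (ρ₁ - ρ₂) = 0) (hv₁₃ : v (ρ₁ - ρ₃) = 0) (hv₂₃ : v (ρ₂ - ρ₃) = 0)
    {π : F} (hπ : π ≠ 0) (hvπ : 0 < v π) :
    ∃ N : ℕ, IsGoodReductionModel v (factored ρ₁ ρ₂ ρ₃ (π ^ N) (π ^ N)) := by
  set e₁ := -(ρ₁ + ρ₂ + ρ₃)
  set e₂ := ρ₁ * ρ₂ + ρ₁ * ρ₃ + ρ₂ * ρ₃
  set e₃ := -(ρ₁ * ρ₂ * ρ₃)
  set B := max (max (max (v e₁) (v e₂)) (v e₃)) 0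
  obtain ⟨N, hN⟩ := hv.exists_map_pow_gt hπ hvπ B
  set P := π ^ N
  have hP : P ≠ 0 := pow_ne_zero N hπ
  have hvP : 0 < v P := lt_of_le_of_lt (le_max_right _ _) hN
  have hPO : P ∈ hv.integers := fun _ => hvP.le
  have hP2 : v (P ^ 2) = 2 * v P := by rw [hv.map_pow hP]; norm_num
  have h2P : v (2 * P) = v P := by rw [hv.map_mul _ _ h2 hP, hv2, zero_add]
  have h2PP : v (2 * P * P) = 2 * v P := by
    rw [hv.map_mul _ _ (mul_ne_zero h2 hP) hP, h2P]
    ring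
  have hbound : ∀ e, v e ≤ B → v e < 2 * v P := fun e he => by linarith
  refine ⟨N, ⟨?_, ?_, ?_, ?_, ?_⟩, ?_⟩
  · exact h2P.symm ▸ hvP.le
  · exact hv.map_sub_nonneg_of_lt (neg_mem (add_mem (add_mem hρ₁ hρ₂) hρ₃)) (pow_mem hPO 2)
      (pow_ne_zero 2 hP) fun _ => hP2 ▸ hbound e₁ (by simp [B])
  · exact h2P.symm ▸ hvP.le
  · exact hv.map_sub_nonneg_of_lt (add_mem (add_mem (mul_mem hρ₁ hρ₂) (mul_mem hρ₁ hρ₃))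
      (mul_mem hρ₂ hρ₃)) (mul_mem (mul_mem (ofNat_mem _ 2) hPO) hPO)
      (mul_ne_zero (mul_ne_zero h2 hP) hP) fun _ => h2PP ▸ hbound e₂ (by simp [B])
  · exact hv.map_sub_nonneg_of_lt (neg_mem (mul_mem (mul_mem hρ₁ hρ₂) hρ₃)) (pow_mem hPO 2)
      (pow_ne_zero 2 hP) fun _ => hP2 ▸ hbound e₃ (by simp [B])
  · rw [val_factored_Δ hv h2 hv2 h₁₂ h₁₃ h₂₃, hv₁₂, hv₁₃, hv₂₃]
    norm_num

end Valuation

section Equidistant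

variable {F : Type} [Field F] {v : F → ℚ}

theorem equid_of_isGoodReductionModel (hv : IsValuationOnNonzero v) (h2 : (2 : F) ≠ 0)
    (hv2 : v 2 = 0) {r₁ r₂ r₃ : F} (h₁₂ : r₁ ≠ r₂) (h₁₃ : r₁ ≠ r₃) (h₂₃ : r₂ ≠ r₃)
    {C : VariableChange F} (h : IsGoodReductionModel v (C • factored r₁ r₂ r₃ 0 0)) :
    Equid v r₁ r₂ r₃ := by
  have hu : (C.u : F) ≠ 0 := C.u.ne_zero
  rw [variableChange_factored] at h
  obtain ⟨h₁₂', h₁₃', h₂₃'⟩ := val_sub_eq_zero_of_isGoodReductionModel hv h2 hv2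
    (sub_div_sq_ne_sub_div_sq hu _ h₁₂) (sub_div_sq_ne_sub_div_sq hu _ h₁₃)
    (sub_div_sq_ne_sub_div_sq hu _ h₂₃) h
  simp only [Equid, hv.map_sub_eq_of_div hu C.r h₁₂, hv.map_sub_eq_of_div hu C.r h₁₃,
    hv.map_sub_eq_of_div hu C.r h₂₃, h₁₂', h₁₃', h₂₃', and_self]

theorem exists_variableChange_isGoodReductionModel (hv : IsValuationOnNonzero v)
    (h2 : (2 : F) ≠ 0) (hv2 : v 2 = 0) {r₁ r₂ r₃ : F} (h₁₂ : r₁ ≠ r₂) (h₁₃ : r₁ ≠ r₃)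
    (h₂₃ : r₂ ≠ r₃) (hr : Equid v r₁ r₂ r₃) {u : F} (hu : u ^ 2 = r₁ - r₂) {π : F}
    (hπ : π ≠ 0) (hvπ : 0 < v π) :
    ∃ C : VariableChange F, IsGoodReductionModel v (C • factored r₁ r₂ r₃ 0 0) := by
  have hu0 : u ≠ 0 := by rintro rfl; exact h₁₂ (by simpa [sub_eq_zero, eq_comm] using hu)
  have hvu : v (r₁ - r₂) = 2 * v u := by rw [← hu, hv.map_pow hu0]; norm_num
  have hzero : ∀ {a b : F}, a ≠ b → v (a - b) = v (r₁ - r₂) →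
      v ((a - r₁) / u ^ 2 - (b - r₁) / u ^ 2) = 0 := fun hab h => by
    linarith [hv.map_sub_eq_of_div hu0 r₁ hab]
  have h₂₁ : v (r₂ - r₁) = v (r₁ - r₂) := by rw [← neg_sub, hv.map_neg (sub_ne_zero.2 h₁₂)]
  have h₃₁ : v (r₃ - r₁) = v (r₁ - r₂) := by
    rw [← neg_sub, hv.map_neg (sub_ne_zero.2 h₁₃), hr.1]
  have hρ₂ : (r₂ - r₁) / u ^ 2 ∈ hv.integers := fun _ => by
    simpa using (hzero (Ne.symm h₁₂) h₂₁).ge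
  have hρ₃ : (r₃ - r₁) / u ^ 2 ∈ hv.integers := fun _ => by
    simpa using (hzero (Ne.symm h₁₃) h₃₁).ge
  obtain ⟨N, hN⟩ := exists_isGoodReductionModel_factored hv h2 hv2 (zero_mem _) hρ₂ hρ₃
    (by simpa using sub_div_sq_ne_sub_div_sq hu0 r₁ h₁₂)
    (by simpa using sub_div_sq_ne_sub_div_sq hu0 r₁ h₁₃) (sub_div_sq_ne_sub_div_sq hu0 r₁ h₂₃)
    (by simpa using hzero h₁₂ rfl) (by simpa using hzero h₁₃ hr.1.symm)
    (hzero h₂₃ (hr.2.symm.trans hr.1.symm)) hπ hvπ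
  refine ⟨⟨Units.mk0 u hu0, r₁, u * π ^ N, u ^ 3 * π ^ N⟩, ?_⟩
  rw [variableChange_factored]
  convert hN using 2 <;> simp [hu0]

end Equidistant

section IntermediateField

variable {K Ω : Type*} [Field K] [Field Ω] [Algebra K Ω]

theorem VariableChange.exists_intermediateField_map_eq [Algebra.IsAlgebraic K Ω]
    (C : VariableChange Ω) :
    ∃ M : IntermediateField K Ω, FiniteDimensional K M ∧
      ∃ Cv : VariableChange M, Cv.map (algebraMap M Ω) = C := by
  set M := IntermediateField.adjoin K {(C.u : Ω), C.r, C.s, C.t}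
  have hfin : FiniteDimensional K M := IntermediateField.finiteDimensional_adjoin
    fun x _ => (Algebra.IsAlgebraic.isAlgebraic x).isIntegral
  have hmem : ∀ x ∈ ({(C.u : Ω), C.r, C.s, C.t} : Set Ω), x ∈ M :=
    fun x hx => IntermediateField.subset_adjoin K _ hx
  have hu : (⟨C.u, hmem _ (by simp)⟩ : M) ≠ 0 := fun h => C.u.ne_zero (congrArg Subtype.val h)
  refine ⟨M, hfin, ⟨Units.mk0 _ hu, ⟨C.r, hmem _ (by simp)⟩, ⟨C.s, hmem _ (by simp)⟩,
    ⟨C.t, hmem _ (by simp)⟩⟩, ?_⟩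
  ext <;> rfl

theorem map_variableChange_baseChange (W : WeierstrassCurve K) (M : IntermediateField K Ω)
    (Cv : VariableChange M) :
    (Cv • W.baseChange M).map (algebraMap M Ω) = Cv.map (algebraMap M Ω) • W.baseChange Ω := by
  rw [← map_variableChange]
  exact congrArg _ (W.map_baseChange (IsScalarTower.toAlgHom K M Ω))

theorem exists_isGoodReductionModel_iff [Algebra.IsAlgebraic K Ω] (v : Ω → ℚ)
    (W : WeierstrassCurve K) :
    (∃ M : IntermediateField K Ω, FiniteDimensional K ↥M ∧
        ∃ Cv : WeierstrassCurve.VariableChange ↥M,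
          (0 ≤ v (((Cv • (W.baseChange ↥M)).a₁ : Ω)) ∧
            0 ≤ v (((Cv • (W.baseChange ↥M)).a₂ : Ω)) ∧
            0 ≤ v (((Cv • (W.baseChange ↥M)).a₃ : Ω)) ∧
            0 ≤ v (((Cv • (W.baseChange ↥M)).a₄ : Ω)) ∧
            0 ≤ v (((Cv • (W.baseChange ↥M)).a₆ : Ω))) ∧
          v (((Cv • (W.baseChange ↥M)).Δ : Ω)) = 0) ↔
      ∃ C : VariableChange Ω, IsGoodReductionModel v (C • W.baseChange Ω) := by
  have key : ∀ (M : IntermediateField K Ω) (Cv : VariableChange M),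
      IsGoodReductionModel v (Cv.map (algebraMap M Ω) • W.baseChange Ω) ↔
        (0 ≤ v (((Cv • (W.baseChange ↥M)).a₁ : Ω)) ∧
            0 ≤ v (((Cv • (W.baseChange ↥M)).a₂ : Ω)) ∧
            0 ≤ v (((Cv • (W.baseChange ↥M)).a₃ : Ω)) ∧
            0 ≤ v (((Cv • (W.baseChange ↥M)).a₄ : Ω)) ∧
            0 ≤ v (((Cv • (W.baseChange ↥M)).a₆ : Ω))) ∧
          v (((Cv • (W.baseChange ↥M)).Δ : Ω)) = 0 := fun M Cv => by
    rw [← map_variableChange_baseChange, IsGoodReductionModel, map_Δ]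
    rfl
  constructor
  · rintro ⟨M, -, Cv, h⟩
    exact ⟨_, (key M Cv).2 h⟩
  · rintro ⟨C, h⟩
    obtain ⟨M, hM, Cv, rfl⟩ := VariableChange.exists_intermediateField_map_eq (K := K) C
    exact ⟨M, hM, Cv, (key M Cv).1 h⟩

end IntermediateField

end WeierstrassCurve


theorem statement18_general
    (p : ℕ) [Fact (Nat.Prime p)] (hp2 : p ≠ 2)
    (K : Type) [Field K] [Algebra ℚ_[p] K]
    (Ω : Type) [Field Ω] [Algebra K Ω] [IsAlgClosure K Ω]
    (v : Ω → ℚ)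
    (hv_mul : ∀ x y : Ω, x ≠ 0 → y ≠ 0 → v (x * y) = v x + v y)
    (hv_add : ∀ x y : Ω, x ≠ 0 → y ≠ 0 → x + y ≠ 0 → min (v x) (v y) ≤ v (x + y))
    (hv_int : ∀ x : K, x ≠ 0 → ∃ n : ℤ, v (algebraMap K Ω x) = (n : ℚ))
    (hv_one : ∃ x : K, x ≠ 0 ∧ v (algebraMap K Ω x) = 1)
    (f : Polynomial K) (hsf : Squarefree f)
    (r₁ r₂ r₃ : Ω)
    (hroots : f.map (algebraMap K Ω) =
      (Polynomial.X - Polynomial.C r₁) *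
        ((Polynomial.X - Polynomial.C r₂) * (Polynomial.X - Polynomial.C r₃)))
    (EW : WeierstrassCurve K)
    (hEW : EW = { a₁ := 0, a₂ := f.coeff 2, a₃ := 0, a₄ := f.coeff 1, a₆ := f.coeff 0 }) :
    (∀ u s : K, u ≠ 0 →
      (Equid v r₁ r₂ r₃ ↔
        Equid v ((algebraMap K Ω u) ^ 2 * r₁ + algebraMap K Ω s)
          ((algebraMap K Ω u) ^ 2 * r₂ + algebraMap K Ω s)
          ((algebraMap K Ω u) ^ 2 * r₃ + algebraMap K Ω s))) ∧
      ((∃ M : IntermediateField K Ω, FiniteDimensional K ↥M ∧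
          ∃ Cv : WeierstrassCurve.VariableChange ↥M,
            (0 ≤ v (((Cv • (EW.baseChange ↥M)).a₁ : Ω)) ∧
              0 ≤ v (((Cv • (EW.baseChange ↥M)).a₂ : Ω)) ∧
              0 ≤ v (((Cv • (EW.baseChange ↥M)).a₃ : Ω)) ∧
              0 ≤ v (((Cv • (EW.baseChange ↥M)).a₄ : Ω)) ∧
              0 ≤ v (((Cv • (EW.baseChange ↥M)).a₆ : Ω))) ∧
            v (((Cv • (EW.baseChange ↥M)).Δ : Ω)) = 0) ↔
        Equid v r₁ r₂ r₃) := by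
  have hv : IsValuationOnNonzero v := ⟨hv_mul, hv_add⟩
  have : CharZero K := charZero_of_injective_algebraMap (algebraMap ℚ_[p] K).injective
  have : CharZero Ω := charZero_of_injective_algebraMap (algebraMap K Ω).injective
  have : IsAlgClosed Ω := IsAlgClosure.isAlgClosed K
  have : Algebra.IsAlgebraic K Ω := IsAlgClosure.isAlgebraic
  have hv2 : v 2 = 0 := hv.map_two_eq_zero hp2 hv_int
  obtain ⟨h₁₂, h₁₃, h₂₃⟩ := pairwise_ne_of_squarefree
    (hroots ▸ (PerfectField.separable_iff_squarefree.2 hsf).map.squarefree)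
  refine ⟨fun u s hu =>
    equid_mul_add_iff hv h₁₂ h₁₃ h₂₃ (pow_ne_zero 2 ((_root_.map_ne_zero _).2 hu)) _, ?_⟩
  rw [WeierstrassCurve.exists_isGoodReductionModel_iff, hEW,
    WeierstrassCurve.baseChange_eq_factored hroots]
  constructor
  · rintro ⟨C, hC⟩
    exact WeierstrassCurve.equid_of_isGoodReductionModel hv two_ne_zero hv2 h₁₂ h₁₃ h₂₃ hC
  · intro hr
    obtain ⟨u, hu⟩ := IsAlgClosed.exists_pow_nat_eq (r₁ - r₂) two_pos
    obtain ⟨π, hπ, hvπ⟩ := hv_one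
    exact WeierstrassCurve.exists_variableChange_isGoodReductionModel hv two_ne_zero hv2
      h₁₂ h₁₃ h₂₃ hr hu ((_root_.map_ne_zero _).2 hπ) (hvπ ▸ one_pos)

/-- Let `p ≠ 2` and `E/K : y² = f(x)` an elliptic curve, `f` a monic
squarefree cubic with roots `r₁, r₂, r₃` in the algebraic closure.  Then
(i) equidistance of the roots is independent of the chosen model `y₁² = f₁(x₁)`
(any two such being related by `x₁ = u²x + s`, `y₁ = u³y` with `u ∈ Kˣ`, `s ∈ K`,
which replaces the roots `rᵢ` by `u²rᵢ + s`); and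
(ii) `E` has potentially good reduction — i.e. over some finite extension `M/K` inside
the algebraic closure there is a Weierstrass model of `E` with integral coefficients and
unit discriminant — if and only if the roots of `f` are equidistant. -/
theorem statement18
    (p : ℕ) [Fact (Nat.Prime p)] (hp2 : p ≠ 2)
    (K : Type) [Field K] [Algebra ℚ_[p] K] [FiniteDimensional ℚ_[p] K]
    (Ω : Type) [Field Ω] [Algebra K Ω] [IsAlgClosure K Ω]
    (v : Ω → ℚ)
    (hv_mul : ∀ x y : Ω, x ≠ 0 → y ≠ 0 → v (x * y) = v x + v y)
    (hv_add : ∀ x y : Ω, x ≠ 0 → y ≠ 0 → x + y ≠ 0 → min (v x) (v y) ≤ v (x + y))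
    (hv_int : ∀ x : K, x ≠ 0 → ∃ n : ℤ, v (algebraMap K Ω x) = (n : ℚ))
    (hv_one : ∃ x : K, x ≠ 0 ∧ v (algebraMap K Ω x) = 1)
    (f : Polynomial K) (hmonic : f.Monic) (hsf : Squarefree f) (hdeg : f.natDegree = 3)
    (r₁ r₂ r₃ : Ω)
    (hroots : f.map (algebraMap K Ω) =
      (Polynomial.X - Polynomial.C r₁) *
        ((Polynomial.X - Polynomial.C r₂) * (Polynomial.X - Polynomial.C r₃)))
    (EW : WeierstrassCurve K)
    (hEW : EW = { a₁ := 0, a₂ := f.coeff 2, a₃ := 0, a₄ := f.coeff 1, a₆ := f.coeff 0 }) :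
    (∀ u s : K, u ≠ 0 →
      (Equid v r₁ r₂ r₃ ↔
        Equid v ((algebraMap K Ω u) ^ 2 * r₁ + algebraMap K Ω s)
          ((algebraMap K Ω u) ^ 2 * r₂ + algebraMap K Ω s)
          ((algebraMap K Ω u) ^ 2 * r₃ + algebraMap K Ω s))) ∧
      ((∃ M : IntermediateField K Ω, FiniteDimensional K ↥M ∧
          ∃ Cv : WeierstrassCurve.VariableChange ↥M,
            (0 ≤ v (((Cv • (EW.baseChange ↥M)).a₁ : Ω)) ∧
              0 ≤ v (((Cv • (EW.baseChange ↥M)).a₂ : Ω)) ∧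
              0 ≤ v (((Cv • (EW.baseChange ↥M)).a₃ : Ω)) ∧
              0 ≤ v (((Cv • (EW.baseChange ↥M)).a₄ : Ω)) ∧
              0 ≤ v (((Cv • (EW.baseChange ↥M)).a₆ : Ω))) ∧
            v (((Cv • (EW.baseChange ↥M)).Δ : Ω)) = 0) ↔
        Equid v r₁ r₂ r₃) :=
  statement18_general p hp2 K Ω v hv_mul hv_add hv_int hv_one f hsf r₁ r₂ r₃ hroots EW hEW
end
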